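/- arXiv:2112.08160 — 4 statements merged into one kernel-verified Lean document; each statement's English description precedes it below -/
import Mathlib

section
/- Suppose |𝒦| ≥ 3, let B ⊂ ℝ² be an open ball, and assume Assumption (A3). Then there exists τ₁ > 0 such that for every two-element subset I = {j,k} ⊆ 𝒦 and every t ∈ [0,τ₁], the set M_I(t) ∩ B is either empty or a set of isolated points, i.e. for every x ∈ M_I(t) ∩ B there exists ε > 0 such that M_I(t) ∩ {y : ‖y − x‖ < ε} = {x}. -/
open Set Metric
open scoped ENNReal NNReal RealInnerProductSpace

noncomputable section

/-- The plane ℝ². -/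
abbrev Plane : Type := EuclideanSpace ℝ (Fin 2)

/-- Gradient with respect to the spatial variable `x` of a function `φ(x,t)`. -/
def gradX (f : Plane → ℝ → ℝ) (x : Plane) (t : ℝ) : Plane :=
  gradient (fun y => f y t) x

/-- Partial derivative with respect to the time variable `t`. -/
def dtPhi (f : Plane → ℝ → ℝ) (x : Plane) (t : ℝ) : ℝ :=
  deriv (fun s => f x s) t

/-- `M_I(t) = {x : Φ̂_I(x,t) = 0}`. -/
def Mset (φ : ℕ → Plane → ℝ → ℝ) (I : Finset ℕ) (t : ℝ) : Set Plane :=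
  {x | ∀ k ∈ I, φ k x t = 0}

/-- `M^r(t) = ⋃_{I ⊆ 𝒦, |I| = r} M_I(t)`. -/
def Mr (φ : ℕ → Plane → ℝ → ℝ) (K : Finset ℕ) (r : ℕ) (t : ℝ) : Set Plane :=
  ⋃ I ∈ {I : Finset ℕ | I ⊆ K ∧ I.card = r}, Mset φ I t

/-- `ω_k(t) = int {x : φ̂_k(x,t) ≤ 0}`. -/
def omegaK (φ : ℕ → Plane → ℝ → ℝ) (k : ℕ) (t : ℝ) : Set Plane :=
  interior {x | φ k x t ≤ 0}

/-- `V_𝒦(t) = ⋂_{k ∈ 𝒦} ω_k(t)`. -/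
def VK (φ : ℕ → Plane → ℝ → ℝ) (K : Finset ℕ) (t : ℝ) : Set Plane :=
  ⋂ k ∈ K, omegaK φ k t

/-- `γ_k(t) = {x : φ̂_k(x,t) = 0, φ̂_j(x,t) < 0 ∀ j ∈ 𝒦 \ {k}}`. -/
def gammaK (φ : ℕ → Plane → ℝ → ℝ) (K : Finset ℕ) (k : ℕ) (t : ℝ) : Set Plane :=
  {x | φ k x t = 0 ∧ ∀ j ∈ K, j ≠ k → φ j x t < 0}

/-- The 2×2 matrix `D_xΦ̂_I(x,t)` for `I = {f-index, g-index}`, whose rows are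
the spatial gradients of `f` and `g`. -/
def DxMat (f g : Plane → ℝ → ℝ) (x : Plane) (t : ℝ) : Matrix (Fin 2) (Fin 2) ℝ :=
  !![gradX f x t 0, gradX f x t 1; gradX g x t 0, gradX g x t 1]

/-- The velocity `−(D_xΦ̂_I(v,0))⁻¹ ∂_tΦ̂_I(v,0)` of a vertex `v`. -/
def vertexVel (f g : Plane → ℝ → ℝ) (v : Plane) : Plane :=
  (WithLp.equiv 2 (Fin 2 → ℝ)).symm
    ((DxMat f g v 0)⁻¹.mulVec ![-(dtPhi f v 0), -(dtPhi g v 0)])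

/-- Assumption (A1): some `ω_k(t)` is uniformly contained in an open ball on `[0,τ₀]`. -/
def AssumpBounded (φ : ℕ → Plane → ℝ → ℝ) (K : Finset ℕ) : Prop :=
  ∃ τ₀ > (0:ℝ), ∃ k ∈ K, ∃ (c : Plane) (R : ℝ), 0 < R ∧
    ∀ t ∈ Icc (0:ℝ) τ₀, closure (omegaK φ k t) ⊆ ball c R

/-- Assumption (A2): nonvanishing spatial gradient on each zero level set at `t = 0`. -/
def AssumpGrad (φ : ℕ → Plane → ℝ → ℝ) (K : Finset ℕ) : Prop :=
  ∀ k ∈ K, ∀ x : Plane, φ k x 0 = 0 → gradX (φ k) x 0 ≠ 0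

/-- Assumption (A3): `D_xΦ̂_I(x,0)` is invertible on `M_I` for each two-element
`I ⊆ 𝒦`, and `M³ = ∅`. -/
def AssumpRank (φ : ℕ → Plane → ℝ → ℝ) (K : Finset ℕ) : Prop :=
  (∀ j ∈ K, ∀ k ∈ K, j ≠ k → ∀ x : Plane, φ j x 0 = 0 → φ k x 0 = 0 →
      (DxMat (φ j) (φ k) x 0).det ≠ 0) ∧
  Mr φ K 3 0 = ∅

/-- Smoothness of the data: each `φ̂_k` is `C^∞` jointly in `(x,t)`. -/
def SmoothData (φ : ℕ → Plane → ℝ → ℝ) (K : Finset ℕ) : Prop :=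
  ∀ k ∈ K, ContDiff ℝ (⊤ : ℕ∞) (fun p : Plane × ℝ => φ k p.1 p.2)

lemma gradX_apply (f : Plane → ℝ → ℝ) (x : Plane) (t : ℝ) (i : Fin 2) :
    gradX f x t i = fderiv ℝ (fun y => f y t) x (EuclideanSpace.single i 1) := by
  have h1 : ⟪gradX f x t, EuclideanSpace.single i (1:ℝ)⟫
      = fderiv ℝ (fun y => f y t) x (EuclideanSpace.single i 1) :=
    InnerProductSpace.toDual_symm_apply
  rw [EuclideanSpace.inner_single_right] at h1
  simpa using h1

lemma slice_contDiff {f : Plane → ℝ → ℝ}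
    (hf : ContDiff ℝ (⊤ : ℕ∞) (fun p : Plane × ℝ => f p.1 p.2)) (t : ℝ) :
    ContDiff ℝ (⊤ : ℕ∞) (fun y : Plane => f y t) :=
  hf.comp (contDiff_id.prodMk contDiff_const)

lemma cont_gradX_entry {f : Plane → ℝ → ℝ}
    (hf : ContDiff ℝ (⊤ : ℕ∞) (fun p : Plane × ℝ => f p.1 p.2)) (i : Fin 2) :
    Continuous fun p : Plane × ℝ => gradX f p.1 p.2 i := by
  have h1 : ContDiff ℝ (⊤:ℕ∞) (Function.uncurry fun (p : Plane × ℝ) (y : Plane) => f y p.2) :=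
    hf.comp (contDiff_snd.prodMk (contDiff_fst.snd))
  have h2 : ContDiff ℝ (0:ℕ∞) fun p : Plane × ℝ => fderiv ℝ (fun y => f y p.2) p.1 :=
    h1.fderiv contDiff_fst (by exact_mod_cast le_top)
  have h3 : Continuous fun p : Plane × ℝ =>
      fderiv ℝ (fun y => f y p.2) p.1 (EuclideanSpace.single i 1) :=
    (ContinuousLinearMap.apply ℝ ℝ (EuclideanSpace.single i (1:ℝ))).continuous.comp
      (contDiff_zero.mp h2)
  simpa only [← gradX_apply] using h3

lemma cont_det {f g : Plane → ℝ → ℝ}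
    (hf : ContDiff ℝ (⊤ : ℕ∞) (fun p : Plane × ℝ => f p.1 p.2))
    (hg : ContDiff ℝ (⊤ : ℕ∞) (fun p : Plane × ℝ => g p.1 p.2)) :
    Continuous fun p : Plane × ℝ => (DxMat f g p.1 p.2).det := by
  have : (fun p : Plane × ℝ => (DxMat f g p.1 p.2).det)
      = fun p : Plane × ℝ => gradX f p.1 p.2 0 * gradX g p.1 p.2 1
        - gradX f p.1 p.2 1 * gradX g p.1 p.2 0 := by
    funext p; simp [DxMat, Matrix.det_fin_two_of]
  rw [this]
  exact ((cont_gradX_entry hf 0).mul (cont_gradX_entry hg 1)).sub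
    ((cont_gradX_entry hf 1).mul (cont_gradX_entry hg 0))

lemma isolated_of_det {f g : Plane → ℝ → ℝ}
    (hf : ContDiff ℝ (⊤ : ℕ∞) (fun p : Plane × ℝ => f p.1 p.2))
    (hg : ContDiff ℝ (⊤ : ℕ∞) (fun p : Plane × ℝ => g p.1 p.2))
    {x : Plane} {t : ℝ} (hdet : (DxMat f g x t).det ≠ 0) :
    ∃ ε > (0:ℝ), ∀ y ∈ ball x ε, f y t = f x t → g y t = g x t → y = x := by
  set Φ : Plane → ℝ × ℝ := fun y => (f y t, g y t) with hΦ
  have hfs := slice_contDiff hf t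
  have hgs := slice_contDiff hg t
  have hΦc : ContDiff ℝ (⊤:ℕ∞) Φ := hfs.prodMk hgs
  set L : Plane →L[ℝ] ℝ × ℝ := fderiv ℝ Φ x with hL
  have hstrict : HasStrictFDerivAt Φ L x :=
    hΦc.contDiffAt.hasStrictFDerivAt (by simp)
  have hLapp : ∀ v : Plane,
      L v = (fderiv ℝ (fun y => f y t) x v, fderiv ℝ (fun y => g y t) x v) := by
    intro v
    rw [hL, DifferentiableAt.fderiv_prodMk (hfs.differentiable (by simp) x)
      (hgs.differentiable (by simp) x)]
    rfl
  have hinner : ∀ (h : Plane → ℝ → ℝ), ∀ v : Plane, fderiv ℝ (fun y => h y t) x v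
        = gradX h x t 0 * v 0 + gradX h x t 1 * v 1 := by
    intro h v
    have hd : ⟪gradX h x t, v⟫ = fderiv ℝ (fun y => h y t) x v :=
      InnerProductSpace.toDual_symm_apply
    rw [← hd, PiLp.inner_apply]
    simp [Fin.sum_univ_two, mul_comm]
  have hker : ∀ v : Plane, L v = 0 → v = 0 := by
    intro v hv
    have h1 : gradX f x t 0 * v 0 + gradX f x t 1 * v 1 = 0 := by
      have := congrArg Prod.fst hv
      rw [hLapp v] at this
      simpa [hinner f v] using this
    have h2 : gradX g x t 0 * v 0 + gradX g x t 1 * v 1 = 0 := by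
      have := congrArg Prod.snd hv
      rw [hLapp v] at this
      simpa [hinner g v] using this
    have hd : gradX f x t 0 * gradX g x t 1 - gradX f x t 1 * gradX g x t 0 ≠ 0 := by
      simpa [DxMat, Matrix.det_fin_two_of] using hdet
    have hv0 : v 0 = 0 := by
      have key : v 0 * (gradX f x t 0 * gradX g x t 1 - gradX f x t 1 * gradX g x t 0) = 0 := by
        linear_combination gradX g x t 1 * h1 - gradX f x t 1 * h2
      exact (mul_eq_zero.mp key).resolve_right hd
    have hv1 : v 1 = 0 := by
      have key : v 1 * (gradX f x t 0 * gradX g x t 1 - gradX f x t 1 * gradX g x t 0) = 0 := by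
        linear_combination gradX f x t 0 * h2 - gradX g x t 0 * h1
      exact (mul_eq_zero.mp key).resolve_right hd
    ext i
    fin_cases i <;> simp [hv0, hv1]
  have hinj : Function.Injective L := by
    intro a b hab
    have hz : L (a - b) = 0 := by rw [map_sub, hab, sub_self]
    exact sub_eq_zero.mp (hker _ hz)
  have hrank : Module.finrank ℝ Plane = Module.finrank ℝ (ℝ × ℝ) := by
    simp [finrank_euclideanSpace_fin]
  let e : Plane ≃L[ℝ] ℝ × ℝ :=
    ((L : Plane →ₗ[ℝ] ℝ × ℝ).linearEquivOfInjective hinj hrank).toContinuousLinearEquiv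
  have heq : (e : Plane →L[ℝ] ℝ × ℝ) = L := by
    ext v <;> rfl
  have hstrict' : HasStrictFDerivAt Φ (e : Plane →L[ℝ] ℝ × ℝ) x := heq ▸ hstrict
  have hev := hstrict'.eventually_left_inverse
  rw [Metric.eventually_nhds_iff_ball] at hev
  obtain ⟨ε, hε, hball⟩ := hev
  refine ⟨ε, hε, fun y hy hfy hgy => ?_⟩
  have h1 := hball y hy
  have h2 := hball x (mem_ball_self hε)
  have hΦeq : Φ y = Φ x := by
    simp only [hΦ, hfy, hgy]
  rw [← h1, hΦeq, h2]

lemma exists_tau {φ : ℕ → Plane → ℝ → ℝ} {K : Finset ℕ}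
    (hsmooth : SmoothData φ K)
    (c : Plane) (R : ℝ)
    (hA3 : ∀ j ∈ K, ∀ k ∈ K, j ≠ k → ∀ x : Plane, φ j x 0 = 0 → φ k x 0 = 0 →
      (DxMat (φ j) (φ k) x 0).det ≠ 0) :
    ∃ τ > (0:ℝ), ∀ j ∈ K, ∀ k ∈ K, j ≠ k → ∀ t ∈ Icc (0:ℝ) τ, ∀ x ∈ closedBall c R,
      φ j x t = 0 → φ k x t = 0 → (DxMat (φ j) (φ k) x t).det ≠ 0 := by
  classical
  set pairs : Finset (ℕ × ℕ) := (K ×ˢ K).filter (fun p => p.1 ≠ p.2) with hpairs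
  set S : Set (Plane × ℝ) := ⋃ p ∈ pairs,
      ((closedBall c R ×ˢ Icc (0:ℝ) 1) ∩
        {q : Plane × ℝ | φ p.1 q.1 q.2 = 0 ∧ φ p.2 q.1 q.2 = 0 ∧
          (DxMat (φ p.1) (φ p.2) q.1 q.2).det = 0}) with hS
  have hmemS : ∀ j ∈ K, ∀ k ∈ K, j ≠ k → ∀ x t, x ∈ closedBall c R → t ∈ Icc (0:ℝ) 1 →
      φ j x t = 0 → φ k x t = 0 → (DxMat (φ j) (φ k) x t).det = 0 → (x, t) ∈ S := by
    intro j hj k hk hjk x t hx ht h1 h2 h3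
    have hp : ((j, k) : ℕ × ℕ) ∈ (pairs : Set (ℕ × ℕ)) := by
      simp [hpairs, Finset.mem_filter, Finset.mem_product, hj, hk, hjk]
    exact Set.mem_biUnion hp ⟨⟨hx, ht⟩, h1, h2, h3⟩
  have hcompact : IsCompact S := by
    apply (pairs : Finset (ℕ × ℕ)).finite_toSet.isCompact_biUnion
    intro p hp
    rw [Finset.mem_coe, hpairs, Finset.mem_filter, Finset.mem_product] at hp
    have hj : p.1 ∈ K := hp.1.1
    have hk : p.2 ∈ K := hp.1.2
    apply ((isCompact_closedBall c R).prod isCompact_Icc).inter_right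
    have c1 : Continuous fun q : Plane × ℝ => φ p.1 q.1 q.2 :=
      (hsmooth p.1 hj).continuous
    have c2 : Continuous fun q : Plane × ℝ => φ p.2 q.1 q.2 :=
      (hsmooth p.2 hk).continuous
    have c3 : Continuous fun q : Plane × ℝ => (DxMat (φ p.1) (φ p.2) q.1 q.2).det :=
      cont_det (hsmooth p.1 hj) (hsmooth p.2 hk)
    exact ((isClosed_eq c1 continuous_const).inter
      ((isClosed_eq c2 continuous_const).inter (isClosed_eq c3 continuous_const)))
  have h0 : ∀ x : Plane, (x, (0:ℝ)) ∉ S := by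
    intro x hx
    rw [hS, mem_iUnion₂] at hx
    obtain ⟨p, hp, hmem⟩ := hx
    rw [hpairs, Finset.mem_filter, Finset.mem_product] at hp
    exact hA3 p.1 hp.1.1 p.2 hp.1.2 hp.2 x hmem.2.1 hmem.2.2.1 hmem.2.2.2
  rcases S.eq_empty_or_nonempty with hSe | hSne
  · refine ⟨1, one_pos, ?_⟩
    intro j hj k hk hjk t ht x hx h1 h2 h3
    have : (x, t) ∈ S := hmemS j hj k hk hjk x t hx ht h1 h2 h3
    rw [hSe] at this
    exact this
  · obtain ⟨t₀, ht₀T, ht₀lb⟩ :=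
      (hcompact.image continuous_snd).exists_isLeast (hSne.image _)
    obtain ⟨q, hqS, hq2⟩ := ht₀T
    have hq1 : t₀ ∈ Icc (0:ℝ) 1 := by
      rw [hS, mem_iUnion₂] at hqS
      obtain ⟨p, _, hmem⟩ := hqS
      rw [← hq2]
      exact hmem.1.2
    have ht₀pos : 0 < t₀ := by
      rcases lt_or_eq_of_le hq1.1 with h | h
      · exact h
      · exfalso
        have hq : ((q.1, (0:ℝ)) : Plane × ℝ) = q := by
          rw [h, ← hq2]
        exact h0 q.1 (by rw [hq]; exact hqS)
    refine ⟨t₀ / 2, by positivity, ?_⟩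
    intro j hj k hk hjk t ht x hx h1 h2 h3
    have ht1 : t ∈ Icc (0:ℝ) 1 := ⟨ht.1, by linarith [ht.2, hq1.2]⟩
    have hmem : (x, t) ∈ S := hmemS j hj k hk hjk x t hx ht1 h1 h2 h3
    have : t₀ ≤ t := ht₀lb ⟨(x, t), hmem, rfl⟩
    linarith [ht.2]

/-- Lemma on `M_I(t)` for two-element `I`: assuming (A3), for a
short time and for each two-element subset `I ⊆ 𝒦`, the set `M_I(t) ∩ B` is either
empty or a set of isolated points: every point of it is isolated in `M_I(t)`. -/
theorem statement1
    (φ : ℕ → Plane → ℝ → ℝ) (K : Finset ℕ)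
    (hsmooth : SmoothData φ K)
    (hcard : 3 ≤ K.card)
    (c : Plane) (R : ℝ) (hR : 0 < R)
    (hA3 : AssumpRank φ K) :
    ∃ τ₁ > (0:ℝ), ∀ I : Finset ℕ, I ⊆ K → I.card = 2 → ∀ t ∈ Icc (0:ℝ) τ₁,
      ∀ x ∈ Mset φ I t ∩ ball c R,
        ∃ ε > (0:ℝ), Mset φ I t ∩ ball x ε = {x} := by
  obtain ⟨τ, hτpos, hτ⟩ := exists_tau hsmooth c R hA3.1
  refine ⟨τ, hτpos, ?_⟩
  intro I hIK hI2 t ht x hx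
  obtain ⟨j, k, hjk, rfl⟩ := Finset.card_eq_two.mp hI2
  have hj : j ∈ K := hIK (by simp)
  have hk : k ∈ K := hIK (by simp)
  obtain ⟨hxM, hxB⟩ := hx
  simp only [Mset, mem_setOf_eq] at hxM
  have hfj : φ j x t = 0 := hxM j (by simp)
  have hfk : φ k x t = 0 := hxM k (by simp)
  have hdet := hτ j hj k hk hjk t ht x (ball_subset_closedBall hxB) hfj hfk
  obtain ⟨ε, hε, hinj⟩ := isolated_of_det (hsmooth j hj) (hsmooth k hk) hdet
  refine ⟨ε, hε, ?_⟩
  apply Subset.antisymm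
  · rintro y ⟨hyM, hyB⟩
    simp only [Mset, mem_setOf_eq] at hyM
    have hy : y = x := hinj y hyB
      (by rw [hyM j (by simp), hfj]) (by rw [hyM k (by simp), hfk])
    simp [hy]
  · rintro y hy
    rw [mem_singleton_iff] at hy
    subst hy
    refine ⟨?_, mem_ball_self hε⟩
    simp only [Mset, mem_setOf_eq]
    exact hxM
end
end

section
/- Suppose Assumptions (A1) and (A3) hold and let I = {j,k} ⊆ 𝒦 be a two-element subset. Then the set M_I ∩ closure(V_𝒦) is finite and there exists τ₁ > 0 such that for every v ∈ M_I ∩ closure(V_𝒦) there exists a unique smooth function z_v : [0,τ₁] → ℝ² with z_v(0) = v and Φ̂_I(z_v(t),t) = 0 for all t ∈ [0,τ₁]; moreover M_I(t) ∩ closure(V_𝒦(t)) = ⋃_{v ∈ M_I ∩ closure(V_𝒦)} {z_v(t)} for all t ∈ [0,τ₁], and z_v′(0) = −(D_xΦ̂_I(v,0))⁻¹ ∂_tΦ̂_I(v,0) for every v ∈ M_I ∩ closure(V_𝒦). -/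
open Set Metric
open scoped ENNReal NNReal RealInnerProductSpace

noncomputable section

namespace S2
abbrev PP := Plane × ℝ

def Psi (f g : Plane → ℝ → ℝ) (p : PP) : Plane :=
  (WithLp.equiv 2 (Fin 2 → ℝ)).symm ![f p.1 p.2, g p.1 p.2]

def Fmap (f g : Plane → ℝ → ℝ) (p : PP) : PP := (Psi f g p, p.2)

lemma Psi_apply0 (f g : Plane → ℝ → ℝ) (p : PP) : Psi f g p 0 = f p.1 p.2 := rfl
lemma Psi_apply1 (f g : Plane → ℝ → ℝ) (p : PP) : Psi f g p 1 = g p.1 p.2 := rfl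

lemma Psi_eq_zero_iff (f g : Plane → ℝ → ℝ) (p : PP) :
    Psi f g p = 0 ↔ f p.1 p.2 = 0 ∧ g p.1 p.2 = 0 := by
  constructor
  · intro h
    exact ⟨by rw [← Psi_apply0 f g p, h]; rfl, by rw [← Psi_apply1 f g p, h]; rfl⟩
  · rintro ⟨h1, h2⟩
    ext i
    fin_cases i
    · simpa [Psi_apply0] using h1
    · simpa [Psi_apply1] using h2


lemma contDiff_Psi {f g : Plane → ℝ → ℝ}
    (hf : ContDiff ℝ (⊤:ℕ∞) (fun p : PP => f p.1 p.2))
    (hg : ContDiff ℝ (⊤:ℕ∞) (fun p : PP => g p.1 p.2)) :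
    ContDiff ℝ (⊤:ℕ∞) (Psi f g) := by
  apply (contDiff_piLp _).2
  intro i
  fin_cases i
  · exact hf
  · exact hg

lemma contDiff_Fmap {f g : Plane → ℝ → ℝ}
    (hf : ContDiff ℝ (⊤:ℕ∞) (fun p : PP => f p.1 p.2))
    (hg : ContDiff ℝ (⊤:ℕ∞) (fun p : PP => g p.1 p.2)) :
    ContDiff ℝ (⊤:ℕ∞) (Fmap f g) :=
  (contDiff_Psi hf hg).prodMk contDiff_snd

/-- The joint derivative of a smooth `f` applied to `(h,s)`. -/
lemma fderiv_joint_apply {f : Plane → ℝ → ℝ}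
    (hf : ContDiff ℝ (⊤:ℕ∞) (fun p : PP => f p.1 p.2)) (x : Plane) (t : ℝ) (h : Plane) (s : ℝ) :
    fderiv ℝ (fun p : PP => f p.1 p.2) (x, t) (h, s)
      = inner ℝ (gradX f x t) h + s * dtPhi f x t := by
  set D := fderiv ℝ (fun p : PP => f p.1 p.2) (x, t) with hD
  have hdiff : HasFDerivAt (fun p : PP => f p.1 p.2) D (x, t) :=
    (hf.differentiable (by simp)).differentiableAt.hasFDerivAt
  have hspace : HasFDerivAt (fun y : Plane => f y t)
      (D.comp (ContinuousLinearMap.inl ℝ Plane ℝ)) x :=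
    by have := hdiff.comp x (hasFDerivAt_prodMk_left (𝕜 := ℝ) x t); exact this
  have htime : HasFDerivAt (fun s : ℝ => f x s)
      (D.comp (ContinuousLinearMap.inr ℝ Plane ℝ)) t :=
    hdiff.comp t (hasFDerivAt_prodMk_right x t)
  have h1 : inner ℝ (gradX f x t) h = D (h, 0) := by
    simp only [gradX, gradient, InnerProductSpace.toDual_symm_apply]
    rw [hspace.fderiv]
    rfl
  have h2 : dtPhi f x t = D (0, 1) := by
    have := htime.hasDerivAt
    rw [dtPhi, this.deriv]
    rfl
  have h3 : (h, s) = (h, (0:ℝ)) + s • ((0:Plane), (1:ℝ)) := by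
    simp [Prod.ext_iff]
  rw [h3, map_add, map_smul, h1, h2]
  simp [smul_eq_mul, mul_comm]

lemma fderiv_Psi_apply0 {f g : Plane → ℝ → ℝ}
    (hf : ContDiff ℝ (⊤:ℕ∞) (fun p : PP => f p.1 p.2))
    (hg : ContDiff ℝ (⊤:ℕ∞) (fun p : PP => g p.1 p.2)) (p : PP) (w : PP) :
    fderiv ℝ (Psi f g) p w 0 = fderiv ℝ (fun q : PP => f q.1 q.2) p w := by
  have hPsi : HasFDerivAt (Psi f g) (fderiv ℝ (Psi f g) p) p :=
    ((contDiff_Psi hf hg).differentiable (by simp)).differentiableAt.hasFDerivAt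
  have hcomp : HasFDerivAt (fun q : PP => f q.1 q.2)
      ((EuclideanSpace.proj (0 : Fin 2)).comp (fderiv ℝ (Psi f g) p)) p :=
    by exact (EuclideanSpace.proj (0 : Fin 2)).hasFDerivAt.comp p hPsi
  rw [hcomp.fderiv]
  rfl

lemma fderiv_Psi_apply1 {f g : Plane → ℝ → ℝ}
    (hf : ContDiff ℝ (⊤:ℕ∞) (fun p : PP => f p.1 p.2))
    (hg : ContDiff ℝ (⊤:ℕ∞) (fun p : PP => g p.1 p.2)) (p : PP) (w : PP) :
    fderiv ℝ (Psi f g) p w 1 = fderiv ℝ (fun q : PP => g q.1 q.2) p w := by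
  have hPsi : HasFDerivAt (Psi f g) (fderiv ℝ (Psi f g) p) p :=
    ((contDiff_Psi hf hg).differentiable (by simp)).differentiableAt.hasFDerivAt
  have hcomp : HasFDerivAt (fun q : PP => g q.1 q.2)
      ((EuclideanSpace.proj (1 : Fin 2)).comp (fderiv ℝ (Psi f g) p)) p :=
    by exact (EuclideanSpace.proj (1 : Fin 2)).hasFDerivAt.comp p hPsi
  rw [hcomp.fderiv]
  rfl

lemma inner_eq_mulVec (A B : Plane) (w : Fin 2 → ℝ) (hw : w = ⇑B) :
    (inner ℝ A B : ℝ) = (!![A 0, A 1; A 0, A 1]).mulVec w 0 := by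
  subst hw
  simp [PiLp.inner_apply, Fin.sum_univ_two, Matrix.mulVec, dotProduct, mul_comm]

/-- `DxMat.mulVec` of (the coercion of) a tangent vector computes the two inner products. -/
lemma DxMat_mulVec (f g : Plane → ℝ → ℝ) (x : Plane) (t : ℝ) (h : Plane) :
    (DxMat f g x t).mulVec ⇑h = ![(inner ℝ (gradX f x t) h : ℝ), (inner ℝ (gradX g x t) h : ℝ)] := by
  funext i
  fin_cases i <;>
    simp [DxMat, Matrix.mulVec, dotProduct, PiLp.inner_apply, Fin.sum_univ_two, mul_comm]

lemma mulVec_cancel {A : Matrix (Fin 2) (Fin 2) ℝ} (hdet : A.det ≠ 0) {w u : Fin 2 → ℝ}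
    (h : A.mulVec w = u) : w = A⁻¹.mulVec u := by
  subst h
  rw [Matrix.mulVec_mulVec, Matrix.nonsing_inv_mul A (isUnit_iff_ne_zero.mpr hdet),
    Matrix.one_mulVec]


/-- At any point where `DxMat` is invertible, `Fmap` has an invertible derivative. -/
lemma exists_equiv_deriv {f g : Plane → ℝ → ℝ}
    (hf : ContDiff ℝ (⊤:ℕ∞) (fun p : PP => f p.1 p.2))
    (hg : ContDiff ℝ (⊤:ℕ∞) (fun p : PP => g p.1 p.2))
    {x : Plane} {t : ℝ} (hdet : (DxMat f g x t).det ≠ 0) :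
    ∃ e : PP ≃L[ℝ] PP, HasFDerivAt (Fmap f g) (e : PP →L[ℝ] PP) (x, t) := by
  have hPsidiff : HasFDerivAt (Psi f g) (fderiv ℝ (Psi f g) (x, t)) (x, t) :=
    ((contDiff_Psi hf hg).differentiable (by simp)).differentiableAt.hasFDerivAt
  set L : PP →L[ℝ] PP :=
    (fderiv ℝ (Psi f g) (x, t)).prod (ContinuousLinearMap.snd ℝ Plane ℝ) with hL
  have hFd : HasFDerivAt (Fmap f g) L (x, t) := hPsidiff.prodMk hasFDerivAt_snd
  have hinj : Function.Injective L := by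
    intro w w' hww
    have h0 : L (w - w') = 0 := by rw [map_sub, hww, sub_self]
    set u : PP := w - w' with hu
    have hsnd : u.2 = 0 := congrArg Prod.snd h0
    have hfst : fderiv ℝ (Psi f g) (x, t) u = 0 := congrArg Prod.fst h0
    have hu1 : u = (u.1, (0:ℝ)) := by rw [← hsnd]
    have e0 : (inner ℝ (gradX f x t) u.1 : ℝ) = 0 := by
      have h1 := fderiv_Psi_apply0 hf hg (x, t) u
      rw [hfst] at h1
      have h2 : fderiv ℝ (fun q : PP => f q.1 q.2) (x, t) u = 0 := by rw [← h1]; rfl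
      rw [hu1] at h2
      rw [fderiv_joint_apply hf x t u.1 0] at h2
      simpa using h2
    have e1 : (inner ℝ (gradX g x t) u.1 : ℝ) = 0 := by
      have h1 := fderiv_Psi_apply1 hf hg (x, t) u
      rw [hfst] at h1
      have h2 : fderiv ℝ (fun q : PP => g q.1 q.2) (x, t) u = 0 := by rw [← h1]; rfl
      rw [hu1] at h2
      rw [fderiv_joint_apply hg x t u.1 0] at h2
      simpa using h2
    have hmv : (DxMat f g x t).mulVec ⇑u.1 = 0 := by
      rw [DxMat_mulVec, e0, e1]
      funext i; fin_cases i <;> rfl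
    have hv := mulVec_cancel hdet hmv
    rw [Matrix.mulVec_zero] at hv
    have hu1z : u.1 = 0 := by ext i; exact congrFun hv i
    have huz : u = 0 := by rw [hu1, hu1z]; rfl
    exact sub_eq_zero.mp (hu ▸ huz)
  have hbij : Function.Bijective L := ⟨hinj, LinearMap.injective_iff_surjective.mp hinj⟩
  set e : PP ≃L[ℝ] PP :=
    (LinearEquiv.ofBijective (L : PP →ₗ[ℝ] PP) hbij).toContinuousLinearEquiv with he
  have hecoe : (e : PP →L[ℝ] PP) = L := ContinuousLinearMap.ext fun w => rfl
  exact ⟨e, by rw [hecoe]; exact hFd⟩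

/-- Joint continuity of the determinant of `DxMat`. -/
lemma continuous_det {f g : Plane → ℝ → ℝ}
    (hf : ContDiff ℝ (⊤:ℕ∞) (fun p : PP => f p.1 p.2))
    (hg : ContDiff ℝ (⊤:ℕ∞) (fun p : PP => g p.1 p.2)) :
    Continuous (fun p : PP => (DxMat f g p.1 p.2).det) := by
  have key : ∀ (h : Plane → ℝ → ℝ), ContDiff ℝ (⊤:ℕ∞) (fun p : PP => h p.1 p.2) →
      ∀ i : Fin 2, Continuous (fun p : PP => gradX h p.1 p.2 i) := by
    intro h hh i
    have hc : Continuous (fun p : PP => fderiv ℝ (fun q : PP => h q.1 q.2) p) :=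
      (hh.continuous_fderiv (by simp))
    have heq : (fun p : PP => gradX h p.1 p.2 i)
        = fun p : PP => fderiv ℝ (fun q : PP => h q.1 q.2) p
            ((EuclideanSpace.single i 1 : Plane), (0:ℝ)) := by
      funext p
      have := fderiv_joint_apply hh p.1 p.2 (EuclideanSpace.single i 1) 0
      rw [this]
      fin_cases i <;>
        simp [PiLp.inner_apply, EuclideanSpace.single_apply, Fin.sum_univ_two]
    rw [heq]
    exact (ContinuousLinearMap.apply ℝ ℝ (((EuclideanSpace.single i 1 : Plane), (0:ℝ)) : PP)).continuous.comp hc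
  have h00 := key f hf 0
  have h01 := key f hf 1
  have h10 := key g hg 0
  have h11 := key g hg 1
  have : (fun p : PP => (DxMat f g p.1 p.2).det)
      = fun p : PP => gradX f p.1 p.2 0 * gradX g p.1 p.2 1
          - gradX f p.1 p.2 1 * gradX g p.1 p.2 0 := by
    funext p
    simp [DxMat, Matrix.det_fin_two]
  rw [this]
  exact ((h00).mul (h11)).sub ((h01).mul (h10))

/-- The inverse-function-theorem chart at a transversal intersection point, with a
neighborhood on which the inverse is `C^∞`. -/
lemma exists_nice_chart {f g : Plane → ℝ → ℝ}
    (hf : ContDiff ℝ (⊤:ℕ∞) (fun p : PP => f p.1 p.2))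
    (hg : ContDiff ℝ (⊤:ℕ∞) (fun p : PP => g p.1 p.2))
    {x : Plane} (hx1 : f x 0 = 0) (hx2 : g x 0 = 0)
    (hdet : (DxMat f g x 0).det ≠ 0) :
    ∃ P : OpenPartialHomeomorph PP PP, ⇑P = Fmap f g ∧ (x, (0:ℝ)) ∈ P.source ∧
      P (x, (0:ℝ)) = ((0 : Plane), (0:ℝ)) ∧
      ∃ T : Set PP, IsOpen T ∧ ((0 : Plane), (0:ℝ)) ∈ T ∧ T ⊆ P.target ∧
        ContDiffOn ℝ (⊤:ℕ∞) P.symm T := by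
  obtain ⟨e, hFe⟩ := exists_equiv_deriv hf hg hdet
  have hFc : ContDiffAt ℝ (⊤:ℕ∞) (Fmap f g) (x, (0:ℝ)) := (contDiff_Fmap hf hg).contDiffAt
  have hn' : (1:ℕ∞) ≤ (⊤:ℕ∞) := le_top
  have hstrict := hFc.hasStrictFDerivAt' hFe (by simp)
  set P := hstrict.toOpenPartialHomeomorph (Fmap f g) with hP
  have hcoe : ⇑P = Fmap f g := rfl
  have hmem : (x, (0:ℝ)) ∈ P.source := hstrict.mem_toOpenPartialHomeomorph_source
  have heq : Fmap f g (x, 0) = ((0:Plane), (0:ℝ)) := by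
    have h0 : Psi f g (x, (0:ℝ)) = 0 := (Psi_eq_zero_iff f g _).mpr ⟨hx1, hx2⟩
    simp [Fmap, h0]
  -- the open set of invertibility
  set N : Set PP := {p : PP | (DxMat f g p.1 p.2).det ≠ 0} with hN
  have hNopen : IsOpen N := by
    have hNeq : N = (fun p : PP => (DxMat f g p.1 p.2).det) ⁻¹' ({0}ᶜ) := by
      ext p; simp [hN]
    rw [hNeq]
    exact isOpen_compl_singleton.preimage (continuous_det hf hg)
  set T : Set PP := P.symm.source ∩ P.symm ⁻¹' (N ∩ P.source) with hT
  have hTopen : IsOpen T := P.symm.isOpen_inter_preimage (hNopen.inter P.open_source)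
  have h00T : ((0 : Plane), (0:ℝ)) ∈ T := by
    have h1 : P.symm ((0 : Plane), (0:ℝ)) = (x, (0:ℝ)) := by
      rw [← heq, ← hcoe]
      exact P.left_inv hmem
    constructor
    · show ((0 : Plane), (0:ℝ)) ∈ P.target
      rw [← heq, ← hcoe]
      exact P.map_source hmem
    · show P.symm ((0 : Plane), (0:ℝ)) ∈ N ∩ P.source
      rw [h1]
      exact ⟨hdet, hmem⟩
  refine ⟨P, hcoe, hmem, by rw [hcoe]; exact heq, T, hTopen, h00T,
    fun q hq => hq.1, ?_⟩
  -- smoothness of the inverse on T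
  intro q hq
  apply ContDiffAt.contDiffWithinAt
  set p : PP := P.symm q with hp
  obtain ⟨hq_tgt, hp_mem⟩ := hq
  have hpN : p ∈ N := hp_mem.1
  have hpS : p ∈ P.source := hp_mem.2
  obtain ⟨ep, hFep⟩ := exists_equiv_deriv (x := p.1) (t := p.2) hf hg hpN
  have hFep' : HasFDerivAt (Fmap f g) (ep : PP →L[ℝ] PP) p := by
    have : ((p.1 : Plane), (p.2 : ℝ)) = p := rfl
    rw [← this]
    exact hFep
  have hFcp : ContDiffAt ℝ (⊤:ℕ∞) (Fmap f g) p := (contDiff_Fmap hf hg).contDiffAt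
  have hloc : ContDiffAt ℝ (⊤:ℕ∞) (hFcp.localInverse hFep' (by simp))
      (Fmap f g p) := hFcp.to_localInverse hFep' (by simp)
  have hFp : Fmap f g p = q := by
    rw [← hcoe]
    exact P.right_inv hq_tgt
  rw [hFp] at hloc
  have hstrictp := hFcp.hasStrictFDerivAt' hFep' (by simp)
  have hev : ∀ᶠ y in nhds q, P.symm y
      = hFcp.localInverse hFep' (by simp) y := by
    have huniq := hstrictp.localInverse_unique (g := ⇑P.symm) ?_
    · rw [hFp] at huniq
      exact huniq
    · have hsrc : P.source ∈ nhds p := P.open_source.mem_nhds hpS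
      filter_upwards [hsrc] with y hy
      rw [← hcoe]
      exact P.left_inv hy
  exact hloc.congr_of_eventuallyEq hev

lemma vertex_data (φ : ℕ → Plane → ℝ → ℝ) (K : Finset ℕ)
    (hsmooth : ∀ m ∈ K, ContDiff ℝ (⊤:ℕ∞) (fun p : PP => φ m p.1 p.2))
    (j k : ℕ) (hj : j ∈ K) (hk : k ∈ K)
    (v : Plane) (hvj : φ j v 0 = 0) (hvk : φ k v 0 = 0)
    (hdet : (DxMat (φ j) (φ k) v 0).det ≠ 0)
    (hneg : ∀ m ∈ K, m ≠ j → m ≠ k → φ m v 0 < 0) :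
    ∃ (τ : ℝ) (z : ℝ → Plane) (U : Set PP), 0 < τ ∧ IsOpen U ∧ (v, (0:ℝ)) ∈ U ∧
      (∀ p ∈ U, ∀ q ∈ U, Fmap (φ j) (φ k) p = Fmap (φ j) (φ k) q → p = q) ∧
      z 0 = v ∧ ContDiffOn ℝ (⊤:ℕ∞) z (Icc (-τ) τ) ∧
      HasDerivAt z (vertexVel (φ j) (φ k) v) 0 ∧
      ∀ t ∈ Icc (-τ) τ, ((z t, t) ∈ U ∧ φ j (z t) t = 0 ∧ φ k (z t) t = 0 ∧
        z t ∈ closure (VK φ K t)) := by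
  have hf := hsmooth j hj
  have hg := hsmooth k hk
  obtain ⟨P, hPcoe, hPmem, hP0, T, hTopen, hT0, hTsub, hTsmooth⟩ :=
    exists_nice_chart hf hg hvj hvk hdet
  -- the negativity neighborhood
  set W : Set PP := ⋂ m ∈ K, {p : PP | m ≠ j → m ≠ k → φ m p.1 p.2 < 0} with hW
  have hWopen : IsOpen W := by
    apply isOpen_biInter_finset
    intro m hm
    by_cases hmj : m = j
    · have : {p : PP | m ≠ j → m ≠ k → φ m p.1 p.2 < 0} = univ := by
        ext p; simp [hmj]
      rw [this]; exact isOpen_univ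
    · by_cases hmk : m = k
      · have : {p : PP | m ≠ j → m ≠ k → φ m p.1 p.2 < 0} = univ := by
          ext p; simp [hmk]
        rw [this]; exact isOpen_univ
      · have : {p : PP | m ≠ j → m ≠ k → φ m p.1 p.2 < 0} = {p : PP | φ m p.1 p.2 < 0} := by
          ext p; simp [hmj, hmk]
        rw [this]
        exact isOpen_lt (hsmooth m hm).continuous continuous_const
  have hWv : (v, (0:ℝ)) ∈ W := by
    apply mem_iInter₂.mpr
    intro m hm
    exact fun h1 h2 => hneg m hm h1 h2
  set U : Set PP := P.source ∩ W with hU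
  have hUopen : IsOpen U := P.open_source.inter hWopen
  have hUv : (v, (0:ℝ)) ∈ U := ⟨hPmem, hWv⟩
  have hUinj : ∀ p ∈ U, ∀ q ∈ U, Fmap (φ j) (φ k) p = Fmap (φ j) (φ k) q → p = q := by
    intro p hp q hq hpq
    apply P.injOn hp.1 hq.1
    rw [hPcoe]; exact hpq
  -- the vertical line map and the implicit curve
  set c : ℝ → PP := fun t => ((0 : Plane), t) with hc
  have hccont : Continuous c := continuous_const.prodMk continuous_id
  set z : ℝ → Plane := fun t => (P.symm ((0 : Plane), t)).1 with hz
  have hsymm00 : P.symm ((0 : Plane), (0:ℝ)) = (v, (0:ℝ)) := by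
    rw [← hP0]; exact P.left_inv hPmem
  have hz0v : z 0 = v := by rw [hz]; simp only; rw [hsymm00]
  -- key pointwise identities
  have key : ∀ t : ℝ, ((0 : Plane), t) ∈ T →
      P.symm ((0 : Plane), t) = (z t, t) ∧ φ j (z t) t = 0 ∧ φ k (z t) t = 0 := by
    intro t ht
    have htgt := hTsub ht
    have hq : P (P.symm ((0 : Plane), t)) = ((0 : Plane), t) := P.right_inv htgt
    rw [hPcoe] at hq
    have hsnd : (P.symm ((0 : Plane), t)).2 = t := congrArg Prod.snd hq
    have hQ : P.symm ((0 : Plane), t) = (z t, t) := by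
      rw [hz]; exact Prod.ext rfl hsnd
    have hPsi : Psi (φ j) (φ k) (z t, t) = 0 := by
      have := congrArg Prod.fst hq
      rw [hQ] at this
      exact this
    obtain ⟨h1, h2⟩ := (Psi_eq_zero_iff _ _ _).mp hPsi
    exact ⟨hQ, h1, h2⟩
  -- choose τ
  have hA1 : c ⁻¹' T ∈ nhds (0:ℝ) := (hTopen.preimage hccont).mem_nhds (by rwa [hc])
  have hsymm_cont0 : ContinuousAt P.symm ((0 : Plane), (0:ℝ)) :=
    P.continuousAt_symm (hTsub hT0)
  have hzeta_cont : ContinuousAt (fun t => P.symm (c t)) 0 := by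
    apply hsymm_cont0.comp
    exact hccont.continuousAt
  have hA2 : (fun t => P.symm (c t)) ⁻¹' U ∈ nhds (0:ℝ) := by
    apply hzeta_cont.preimage_mem_nhds
    apply hUopen.mem_nhds
    show P.symm (c 0) ∈ U
    rw [hc]
    simp only
    rw [hsymm00]
    exact hUv
  obtain ⟨ε, hε, hball⟩ := Metric.mem_nhds_iff.mp (Filter.inter_mem hA1 hA2)
  set τ : ℝ := ε / 2 with hτ
  have hτpos : 0 < τ := half_pos hε
  have hIccA : ∀ t ∈ Icc (-τ) τ, ((0 : Plane), t) ∈ T ∧ P.symm ((0 : Plane), t) ∈ U := by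
    intro t ht
    have : t ∈ Metric.ball (0:ℝ) ε := by
      rw [Metric.mem_ball, Real.dist_eq, sub_zero]
      have habs : |t| ≤ τ := abs_le.mpr ⟨ht.1, ht.2⟩
      rw [hτ] at habs
      linarith
    have hh := hball this
    exact ⟨hh.1, hh.2⟩
  -- smoothness of z on the time interval
  have hzsmooth : ∀ s : Set ℝ, (∀ t ∈ s, ((0 : Plane), t) ∈ T) → ContDiffOn ℝ (⊤:ℕ∞) z s := by
    intro s hs
    have hcs : ContDiffOn ℝ (⊤:ℕ∞) c s := (contDiff_const.prodMk contDiff_id).contDiffOn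
    have hcomp : ContDiffOn ℝ (⊤:ℕ∞) (P.symm ∘ c) s :=
      hTsmooth.comp hcs (fun t ht => hs t ht)
    exact contDiff_fst.comp_contDiffOn hcomp
  have hzIcc : ContDiffOn ℝ (⊤:ℕ∞) z (Icc (-τ) τ) :=
    hzsmooth _ (fun t ht => (hIccA t ht).1)
  -- z is smooth at 0 (on an open neighborhood)
  have hTc_open : IsOpen (c ⁻¹' T) := hTopen.preimage hccont
  have hTc_mem : (0:ℝ) ∈ c ⁻¹' T := by rw [hc]; exact hT0
  have hzAt : ContDiffAt ℝ (⊤:ℕ∞) z 0 :=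
    (hzsmooth (c ⁻¹' T) (fun t ht => ht)).contDiffAt (hTc_open.mem_nhds hTc_mem)
  have hzdiff : DifferentiableAt ℝ z 0 :=
    hzAt.differentiableAt (by simp)
  have hzD : HasDerivAt z (deriv z 0) 0 := hzdiff.hasDerivAt
  -- implicit differentiation: the derivative of z at 0
  have hcurve : HasDerivAt (fun t => (z t, t)) (deriv z 0, 1) 0 := by
    have h2 : HasDerivAt (fun t : ℝ => t) 1 0 := hasDerivAt_id 0
    exact hzD.prodMk h2
  have himpl : ∀ (h : Plane → ℝ → ℝ), ContDiff ℝ (⊤:ℕ∞) (fun p : PP => h p.1 p.2) →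
      (∀ᶠ t in nhds (0:ℝ), h (z t) t = 0) →
      (inner ℝ (gradX h v 0) (deriv z 0) : ℝ) = -(dtPhi h v 0) := by
    intro h hh hzero
    have hD : HasFDerivAt (fun p : PP => h p.1 p.2)
        (fderiv ℝ (fun p : PP => h p.1 p.2) (v, 0)) ((z 0, (0:ℝ))) := by
      rw [hz0v]
      exact (hh.differentiable (by simp)).differentiableAt.hasFDerivAt
    have hcompD : HasDerivAt (fun t => h (z t) t)
        (fderiv ℝ (fun p : PP => h p.1 p.2) (v, 0) (deriv z 0, 1)) 0 :=
      hD.comp_hasDerivAt (f := fun t => (z t, t)) 0 hcurve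
    have hconst : HasDerivAt (fun _ : ℝ => (0:ℝ))
        (fderiv ℝ (fun p : PP => h p.1 p.2) (v, 0) (deriv z 0, 1)) 0 :=
      hcompD.congr_of_eventuallyEq (by filter_upwards [hzero] with t ht using ht.symm)
    have hzero' : fderiv ℝ (fun p : PP => h p.1 p.2) (v, 0) (deriv z 0, 1) = 0 :=
      hconst.unique (hasDerivAt_const 0 0)
    rw [fderiv_joint_apply hh v 0 (deriv z 0) 1] at hzero'
    linarith
  have hev_zero : ∀ᶠ t in nhds (0:ℝ), φ j (z t) t = 0 ∧ φ k (z t) t = 0 := by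
    filter_upwards [hTc_open.mem_nhds hTc_mem] with t ht
    exact ⟨(key t ht).2.1, (key t ht).2.2⟩
  have himplj := himpl (φ j) hf (by filter_upwards [hev_zero] with t ht using ht.1)
  have himplk := himpl (φ k) hg (by filter_upwards [hev_zero] with t ht using ht.2)
  have hmv : (DxMat (φ j) (φ k) v 0).mulVec ⇑(deriv z 0)
      = ![-(dtPhi (φ j) v 0), -(dtPhi (φ k) v 0)] := by
    rw [DxMat_mulVec, himplj, himplk]
  have hvel : deriv z 0 = vertexVel (φ j) (φ k) v := by
    have hv2 := mulVec_cancel hdet hmv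
    ext i
    exact congrFun hv2 i
  have hzDvel : HasDerivAt z (vertexVel (φ j) (φ k) v) 0 := hvel ▸ hzD
  -- closure density
  have hclos : ∀ t ∈ Icc (-τ) τ, z t ∈ closure (VK φ K t) := by
    intro t ht
    obtain ⟨h0tT, hzU⟩ := hIccA t ht
    have hzeta : P.symm ((0 : Plane), t) = (z t, t) := (key t h0tT).1
    rw [hzeta] at hzU
    -- the approximating sequence
    set w₀ : Plane := (WithLp.equiv 2 (Fin 2 → ℝ)).symm ![-1, -1] with hw₀
    set cs : ℕ → PP := fun n => (((1:ℝ)/(n+1)) • w₀, t) with hcs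
    have hcs_lim : Filter.Tendsto cs Filter.atTop (nhds ((0 : Plane), t)) := by
      have h1 : Filter.Tendsto (fun n : ℕ => (1:ℝ)/(n+1)) Filter.atTop (nhds 0) :=
        tendsto_one_div_add_atTop_nhds_zero_nat
      have h2 : Filter.Tendsto (fun n : ℕ => ((1:ℝ)/(n+1)) • w₀) Filter.atTop
          (nhds ((0:ℝ) • w₀)) := h1.smul_const w₀
      rw [zero_smul] at h2
      exact h2.prodMk_nhds tendsto_const_nhds
    have hsymm_at : ContinuousAt P.symm ((0 : Plane), t) := P.continuousAt_symm (hTsub h0tT)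
    have hy_lim : Filter.Tendsto (fun n => P.symm (cs n)) Filter.atTop (nhds (z t, t)) := by
      rw [← hzeta]
      exact (hsymm_at.tendsto).comp hcs_lim
    have hevT : ∀ᶠ n in Filter.atTop, cs n ∈ T := hcs_lim (hTopen.mem_nhds h0tT)
    have hevU : ∀ᶠ n in Filter.atTop, P.symm (cs n) ∈ U := hy_lim (hUopen.mem_nhds hzU)
    have hmem : ∀ᶠ n in Filter.atTop, (P.symm (cs n)).1 ∈ VK φ K t := by
      filter_upwards [hevT, hevU] with n hnT hnU
      set y : PP := P.symm (cs n) with hy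
      have hPy : P y = cs n := P.right_inv (hTsub hnT)
      rw [hPcoe] at hPy
      have hsnd : y.2 = t := by
        have := congrArg Prod.snd hPy
        exact this
      have hPsi : Psi (φ j) (φ k) y = ((1:ℝ)/(n+1)) • w₀ := congrArg Prod.fst hPy
      have hpos : (0:ℝ) < (1:ℝ)/(n+1) := by positivity
      have hyj : φ j y.1 y.2 = -((1:ℝ)/(n+1)) := by
        have := congrFun (congrArg (fun (q : Plane) => (q : Fin 2 → ℝ)) hPsi) 0
        simpa [Psi, hw₀] using this
      have hyk : φ k y.1 y.2 = -((1:ℝ)/(n+1)) := by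
        have := congrFun (congrArg (fun (q : Plane) => (q : Fin 2 → ℝ)) hPsi) 1
        simpa [Psi, hw₀] using this
      apply mem_iInter₂.mpr
      intro m hm
      have hlt : φ m y.1 t < 0 := by
        by_cases hmj : m = j
        · rw [hmj, ← hsnd, hyj]; linarith
        · by_cases hmk : m = k
          · rw [hmk, ← hsnd, hyk]; linarith
          · have := mem_iInter₂.mp hnU.2 m hm hmj hmk
            rwa [hsnd] at this
      have hopen : IsOpen {y' : Plane | φ m y' t < 0} :=
        isOpen_lt ((hsmooth m hm).continuous.comp
          (continuous_id.prodMk continuous_const)) continuous_const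
      exact interior_maximal (fun y' (hy' : φ m y' t < 0) => le_of_lt hy') hopen hlt
    have hy1_lim : Filter.Tendsto (fun n => (P.symm (cs n)).1) Filter.atTop (nhds (z t)) :=
      (continuous_fst.tendsto ((z t, t) : PP)).comp hy_lim
    exact mem_closure_of_tendsto hy1_lim hmem
  exact ⟨τ, z, U, hτpos, hUopen, hUv, hUinj, hz0v, hzIcc, hzDvel,
    fun t ht => ⟨by rw [← (key t (hIccA t ht).1).1]; exact (hIccA t ht).2,
      (key t (hIccA t ht).1).2.1, (key t (hIccA t ht).1).2.2, hclos t ht⟩⟩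

lemma mem_Mset_pair {φ : ℕ → Plane → ℝ → ℝ} {j k : ℕ} {t : ℝ} {x : Plane} :
    x ∈ Mset φ {j, k} t ↔ φ j x t = 0 ∧ φ k x t = 0 := by
  constructor
  · intro h
    exact ⟨h j (by simp), h k (by simp)⟩
  · rintro ⟨h1, h2⟩ m hm
    rcases Finset.mem_insert.mp hm with rfl | hm
    · exact h1
    · rw [Finset.mem_singleton.mp hm]
      exact h2

lemma closure_VK_subset {φ : ℕ → Plane → ℝ → ℝ} {K : Finset ℕ}
    (hsmooth : ∀ m ∈ K, ContDiff ℝ (⊤:ℕ∞) (fun p : PP => φ m p.1 p.2))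
    {m : ℕ} (hm : m ∈ K) (t : ℝ) :
    closure (VK φ K t) ⊆ {x : Plane | φ m x t ≤ 0} := by
  apply closure_minimal
  · intro x hx
    have h1 : x ∈ omegaK φ m t := mem_iInter₂.mp hx m hm
    exact interior_subset h1
  · exact isClosed_le ((hsmooth m hm).continuous.comp
      (continuous_id.prodMk continuous_const)) continuous_const

lemma strict_neg {φ : ℕ → Plane → ℝ → ℝ} {K : Finset ℕ}
    (hMr3 : Mr φ K 3 0 = ∅) {j k m : ℕ} (hj : j ∈ K) (hk : k ∈ K) (hm : m ∈ K)
    (hjk : j ≠ k) (hmj : m ≠ j) (hmk : m ≠ k) {x : Plane}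
    (hxj : φ j x 0 = 0) (hxk : φ k x 0 = 0) (hxm : φ m x 0 ≤ 0) : φ m x 0 < 0 := by
  rcases lt_or_eq_of_le hxm with h | h
  · exact h
  · exfalso
    have hxmem : x ∈ Mset φ {j, k, m} 0 := by
      intro i hi
      rcases Finset.mem_insert.mp hi with rfl | hi
      · exact hxj
      rcases Finset.mem_insert.mp hi with rfl | hi
      · exact hxk
      · rw [Finset.mem_singleton.mp hi]
        exact h
    have hcard : ({j, k, m} : Finset ℕ).card = 3 := by
      rw [Finset.card_insert_of_notMem (by simp [hjk, hmj.symm]),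
        Finset.card_insert_of_notMem (by simp [hmk.symm])]
      rfl
    have hsub : ({j, k, m} : Finset ℕ) ⊆ K := by
      intro i hi
      rcases Finset.mem_insert.mp hi with rfl | hi
      · exact hj
      rcases Finset.mem_insert.mp hi with rfl | hi
      · exact hk
      · rw [Finset.mem_singleton.mp hi]
        exact hm
    have : x ∈ Mr φ K 3 0 := by
      apply mem_iUnion₂.mpr
      exact ⟨{j, k, m}, ⟨hsub, hcard⟩, hxmem⟩
    rw [hMr3] at this
    exact this

end S2

open S2

/-- Lemma 2 of the paper: under (A1) and (A3), for a two-element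
subset `I = {j,k} ⊆ 𝒦` the set `M_I ∩ closure(V_𝒦)` is finite, and for small time
each point `v` of it moves along a unique smooth curve `z_v` with `z_v(0) = v`,
`Φ̂_I(z_v(t),t) = 0`; the perturbed set `M_I(t) ∩ closure(V_𝒦(t))` is the union of
the `z_v(t)`, and `z_v′(0) = −(D_xΦ̂_I(v,0))⁻¹ ∂_tΦ̂_I(v,0)`. -/
theorem statement2
    (φ : ℕ → Plane → ℝ → ℝ) (K : Finset ℕ)
    (hsmooth : SmoothData φ K)
    (hA1 : AssumpBounded φ K)
    (hA3 : AssumpRank φ K)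
    (j k : ℕ) (hj : j ∈ K) (hk : k ∈ K) (hjk : j ≠ k) :
    (Mset φ {j, k} 0 ∩ closure (VK φ K 0)).Finite ∧
    ∃ τ₁ > (0:ℝ), ∃ z : Plane → ℝ → Plane,
      (∀ v ∈ Mset φ {j, k} 0 ∩ closure (VK φ K 0),
        -- `z v` is smooth on `[0,τ₁]`, starts at `v`, and stays on the zero set of `Φ̂_I`
        (ContDiffOn ℝ (⊤ : ℕ∞) (z v) (Icc 0 τ₁) ∧ z v 0 = v ∧
          ∀ t ∈ Icc (0:ℝ) τ₁, φ j (z v t) t = 0 ∧ φ k (z v t) t = 0) ∧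
        -- uniqueness: any other such smooth curve agrees with `z v` on `[0,τ₁]`
        (∀ w : ℝ → Plane,
          (ContDiffOn ℝ (⊤ : ℕ∞) w (Icc 0 τ₁) ∧ w 0 = v ∧
            ∀ t ∈ Icc (0:ℝ) τ₁, φ j (w t) t = 0 ∧ φ k (w t) t = 0) →
          EqOn w (z v) (Icc 0 τ₁)) ∧
        -- the derivative formula `z_v′(0) = −(D_xΦ̂_I(v,0))⁻¹ ∂_tΦ̂_I(v,0)`
        HasDerivWithinAt (z v) (vertexVel (φ j) (φ k) v) (Icc 0 τ₁) 0) ∧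
      -- decomposition of `M_I(t) ∩ closure(V_𝒦(t))`
      (∀ t ∈ Icc (0:ℝ) τ₁,
        Mset φ {j, k} t ∩ closure (VK φ K t)
          = ⋃ v ∈ Mset φ {j, k} 0 ∩ closure (VK φ K 0), {z v t}) := by
  classical
  obtain ⟨hdetA, hMr3⟩ := hA3
  obtain ⟨τ₀, hτ₀, k₀, hk₀, cc, R, hR, hball⟩ := hA1
  set S : Set Plane := Mset φ {j, k} 0 ∩ closure (VK φ K 0) with hSdef
  -- per-vertex basic facts
  have hbase : ∀ v ∈ S, φ j v 0 = 0 ∧ φ k v 0 = 0 ∧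
      (∀ m ∈ K, m ≠ j → m ≠ k → φ m v 0 < 0) := by
    rintro v ⟨hv1, hv2⟩
    obtain ⟨h1, h2⟩ := mem_Mset_pair.mp hv1
    refine ⟨h1, h2, fun m hm hmj hmk => ?_⟩
    exact strict_neg hMr3 hj hk hm hjk hmj hmk h1 h2 (closure_VK_subset hsmooth hm 0 hv2)
  -- vertex data via choice
  have hvd : ∀ v ∈ S, ∃ (τ : ℝ) (zv : ℝ → Plane) (U : Set PP), 0 < τ ∧ IsOpen U ∧
      (v, (0:ℝ)) ∈ U ∧
      (∀ p ∈ U, ∀ q ∈ U, Fmap (φ j) (φ k) p = Fmap (φ j) (φ k) q → p = q) ∧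
      zv 0 = v ∧ ContDiffOn ℝ (⊤:ℕ∞) zv (Icc (-τ) τ) ∧
      HasDerivAt zv (vertexVel (φ j) (φ k) v) 0 ∧
      ∀ t ∈ Icc (-τ) τ, ((zv t, t) ∈ U ∧ φ j (zv t) t = 0 ∧ φ k (zv t) t = 0 ∧
        zv t ∈ closure (VK φ K t)) := by
    intro v hv
    obtain ⟨h1, h2, h3⟩ := hbase v hv
    exact vertex_data φ K hsmooth j k hj hk v h1 h2 (hdetA j hj k hk hjk v h1 h2) h3
  choose! τf zf Uf hτpos hUopen hUmem hUinj hz0 hzsm hzvel hzprop using hvd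
  -- finiteness
  have hMsetClosed : ∀ t : ℝ, IsClosed (Mset φ ({j, k} : Finset ℕ) t) := by
    intro t
    have : Mset φ ({j, k} : Finset ℕ) t = {x | φ j x t = 0} ∩ {x | φ k x t = 0} := by
      ext x
      simp only [mem_inter_iff, mem_setOf_eq]
      exact mem_Mset_pair
    rw [this]
    have hc : ∀ m, m ∈ K → IsClosed {x : Plane | φ m x t = 0} := fun m hm =>
      isClosed_eq ((hsmooth m hm).continuous.comp
        (continuous_id.prodMk continuous_const)) continuous_const
    exact (hc j hj).inter (hc k hk)
  have hSsub : ∀ t ∈ Icc (0:ℝ) τ₀, closure (VK φ K t) ⊆ closedBall cc R := by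
    intro t ht x hx
    apply ball_subset_closedBall
    apply hball t ht
    exact closure_mono (biInter_subset_of_mem hk₀) hx
  have h0mem : (0:ℝ) ∈ Icc (0:ℝ) τ₀ := ⟨le_refl 0, le_of_lt hτ₀⟩
  have hSfin : S.Finite := by
    have hScl : IsClosed S := (hMsetClosed 0).inter isClosed_closure
    have hScpt : IsCompact S := (isCompact_closedBall cc R).of_isClosed_subset hScl
      (fun x hx => hSsub 0 h0mem hx.2)
    have hcover : S ⊆ ⋃ v ∈ S, {x : Plane | (x, (0:ℝ)) ∈ Uf v} := by
      intro x hx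
      exact mem_iUnion₂.mpr ⟨x, hx, hUmem x hx⟩
    obtain ⟨S', hS'sub, hS'fin, hS'cover⟩ := hScpt.elim_finite_subcover_image
      (fun v hv => (hUopen v hv).preimage (continuous_id.prodMk continuous_const)) hcover
    apply hS'fin.subset
    intro x hx
    obtain ⟨v, hvS', hxv⟩ := mem_iUnion₂.mp (hS'cover hx)
    have hvS := hS'sub hvS'
    have hxz : Fmap (φ j) (φ k) (x, (0:ℝ)) = Fmap (φ j) (φ k) (v, (0:ℝ)) := by
      obtain ⟨hx1, hx2, _⟩ := hbase x hx
      obtain ⟨hv1, hv2, _⟩ := hbase v hvS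
      show (Psi (φ j) (φ k) (x, (0:ℝ)), (0:ℝ)) = (Psi (φ j) (φ k) (v, (0:ℝ)), (0:ℝ))
      rw [(Psi_eq_zero_iff _ _ _).mpr ⟨hx1, hx2⟩, (Psi_eq_zero_iff _ _ _).mpr ⟨hv1, hv2⟩]
    have := hUinj v hvS (x, (0:ℝ)) hxv (v, (0:ℝ)) (hUmem v hvS) hxz
    have hxv' : x = v := congrArg Prod.fst this
    rwa [hxv']
  -- a uniform positive lower bound for the τf
  have hτmin : ∃ τm : ℝ, 0 < τm ∧ ∀ v ∈ S, τm ≤ τf v := by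
    set Fs : Finset ℝ := insert (1:ℝ) (hSfin.toFinset.image τf) with hFs
    have hFsne : Fs.Nonempty := ⟨1, Finset.mem_insert_self _ _⟩
    refine ⟨Fs.min' hFsne, ?_, ?_⟩
    · apply (Finset.lt_min'_iff Fs hFsne).mpr
      intro b hb
      rcases Finset.mem_insert.mp hb with rfl | hb
      · norm_num
      · obtain ⟨v, hv, rfl⟩ := Finset.mem_image.mp hb
        exact hτpos v (hSfin.mem_toFinset.mp hv)
    · intro v hv
      exact Finset.min'_le _ _ (Finset.mem_insert_of_mem
        (Finset.mem_image_of_mem τf (hSfin.mem_toFinset.mpr hv)))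
  obtain ⟨τm, hτm, hτmle⟩ := hτmin
  -- the hard direction: a uniform time up to which no other intersection points exist
  have hforward : ∃ τ₂ > (0:ℝ), ∀ t ∈ Icc (0:ℝ) τ₂, ∀ x : Plane,
      x ∈ Mset φ {j, k} t ∩ closure (VK φ K t) → ∃ v ∈ S, x = zf v t := by
    by_contra hcon
    push_neg at hcon
    have hseq : ∀ n : ℕ, ∃ (t : ℝ) (x : Plane), t ∈ Icc (0:ℝ) (min ((1:ℝ)/(n+1)) τ₀) ∧
        x ∈ Mset φ {j, k} t ∩ closure (VK φ K t) ∧ ∀ v ∈ S, x ≠ zf v t := by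
      intro n
      have hpos : (0:ℝ) < min ((1:ℝ)/(n+1)) τ₀ := lt_min (by positivity) hτ₀
      obtain ⟨t, ht, x, hx, hbad⟩ := hcon (min ((1:ℝ)/(n+1)) τ₀) hpos
      exact ⟨t, x, ht, hx, fun v hv => by
        intro h
        exact hbad v hv h⟩
    choose ts xs hts hxs hbad using hseq
    have hts0 : Filter.Tendsto ts Filter.atTop (nhds 0) := by
      apply squeeze_zero (fun n => (hts n).1)
        (fun n => le_trans (hts n).2 (min_le_left _ _))
      exact tendsto_one_div_add_atTop_nhds_zero_nat
    have htsIcc : ∀ n, ts n ∈ Icc (0:ℝ) τ₀ :=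
      fun n => ⟨(hts n).1, le_trans (hts n).2 (min_le_right _ _)⟩
    have hxball : ∀ n, xs n ∈ closedBall cc R :=
      fun n => hSsub (ts n) (htsIcc n) (hxs n).2
    obtain ⟨xstar, hxstar_mem, ψ, hψmono, hψlim⟩ :=
      (isCompact_closedBall cc R).tendsto_subseq hxball
    have htψ : Filter.Tendsto (fun n => ts (ψ n)) Filter.atTop (nhds 0) :=
      hts0.comp hψmono.tendsto_atTop
    have hpair : Filter.Tendsto (fun n => ((xs (ψ n) : Plane), ts (ψ n)))
        Filter.atTop (nhds ((xstar : Plane), (0:ℝ))) := hψlim.prodMk_nhds htψ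
    -- limit values of φ
    have hlimval : ∀ m ∈ K, Filter.Tendsto (fun n => φ m (xs (ψ n)) (ts (ψ n)))
        Filter.atTop (nhds (φ m xstar 0)) :=
      fun m hm => ((hsmooth m hm).continuous.tendsto _).comp hpair
    have hxstarj : φ j xstar 0 = 0 := by
      apply tendsto_nhds_unique (hlimval j hj)
      have : ∀ n, φ j (xs (ψ n)) (ts (ψ n)) = 0 :=
        fun n => (mem_Mset_pair.mp (hxs (ψ n)).1).1
      simp only [this]
      exact tendsto_const_nhds
    have hxstark : φ k xstar 0 = 0 := by
      apply tendsto_nhds_unique (hlimval k hk)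
      have : ∀ n, φ k (xs (ψ n)) (ts (ψ n)) = 0 :=
        fun n => (mem_Mset_pair.mp (hxs (ψ n)).1).2
      simp only [this]
      exact tendsto_const_nhds
    have hxstarle : ∀ m ∈ K, φ m xstar 0 ≤ 0 := by
      intro m hm
      apply le_of_tendsto (hlimval m hm)
      filter_upwards with n
      exact closure_VK_subset hsmooth hm (ts (ψ n)) (hxs (ψ n)).2
    have hxstarneg : ∀ m ∈ K, m ≠ j → m ≠ k → φ m xstar 0 < 0 :=
      fun m hm hmj hmk => strict_neg hMr3 hj hk hm hjk hmj hmk hxstarj hxstark (hxstarle m hm)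
    -- xstar is a vertex
    have hxstarS : xstar ∈ S := by
      obtain ⟨τx, zx, Ux, hτx, _, _, _, hzx0, _, _, hpropx⟩ :=
        vertex_data φ K hsmooth j k hj hk xstar hxstarj hxstark
          (hdetA j hj k hk hjk xstar hxstarj hxstark) hxstarneg
      have h0I : (0:ℝ) ∈ Icc (-τx) τx := ⟨by linarith, le_of_lt hτx⟩
      have := (hpropx 0 h0I).2.2.2
      rw [hzx0] at this
      exact ⟨mem_Mset_pair.mpr ⟨hxstarj, hxstark⟩, this⟩
    -- eventually the sequence coincides with the flow of xstar: contradiction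
    have hUx : IsOpen (Uf xstar) := hUopen xstar hxstarS
    have hUxmem : (xstar, (0:ℝ)) ∈ Uf xstar := hUmem xstar hxstarS
    have hev1 : ∀ᶠ n in Filter.atTop, ((xs (ψ n) : Plane), ts (ψ n)) ∈ Uf xstar :=
      hpair (hUx.mem_nhds hUxmem)
    have hev2 : ∀ᶠ n in Filter.atTop, ts (ψ n) ∈ Icc (-(τf xstar)) (τf xstar) := by
      have hIoo : Ioo (-(τf xstar)) (τf xstar) ∈ nhds (0:ℝ) :=
        Ioo_mem_nhds (by linarith [hτpos xstar hxstarS]) (hτpos xstar hxstarS)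
      filter_upwards [htψ hIoo] with n hn
      exact Ioo_subset_Icc_self hn
    obtain ⟨n, hn1, hn2⟩ := (hev1.and hev2).exists
    obtain ⟨hzU, hzj, hzk, _⟩ := hzprop xstar hxstarS (ts (ψ n)) hn2
    have hFeq : Fmap (φ j) (φ k) ((xs (ψ n) : Plane), ts (ψ n))
        = Fmap (φ j) (φ k) (zf xstar (ts (ψ n)), ts (ψ n)) := by
      obtain ⟨hxj', hxk'⟩ := mem_Mset_pair.mp (hxs (ψ n)).1
      show (Psi (φ j) (φ k) _, _) = (Psi (φ j) (φ k) _, _)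
      rw [(Psi_eq_zero_iff _ _ _).mpr ⟨hxj', hxk'⟩, (Psi_eq_zero_iff _ _ _).mpr ⟨hzj, hzk⟩]
    have := hUinj xstar hxstarS _ hn1 _ hzU hFeq
    exact hbad (ψ n) xstar hxstarS (congrArg Prod.fst this)
  obtain ⟨τ₂, hτ₂, hfw⟩ := hforward
  set τ₁ : ℝ := min τm τ₂ with hτ₁def
  have hτ₁pos : 0 < τ₁ := lt_min hτm hτ₂
  have hτ₁le : ∀ v ∈ S, ∀ t ∈ Icc (0:ℝ) τ₁, t ∈ Icc (-(τf v)) (τf v) := by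
    intro v hv t ht
    have h1 : τ₁ ≤ τf v := le_trans (min_le_left _ _) (hτmle v hv)
    have h2 : 0 < τf v := hτpos v hv
    exact ⟨by linarith [ht.1], by linarith [ht.2]⟩
  refine ⟨hSfin, τ₁, hτ₁pos, zf, ?_, ?_⟩
  · intro v hv
    have hIccsub : Icc (0:ℝ) τ₁ ⊆ Icc (-(τf v)) (τf v) := fun t ht => hτ₁le v hv t ht
    refine ⟨⟨(hzsm v hv).mono hIccsub, hz0 v hv,
      fun t ht => ⟨(hzprop v hv t (hτ₁le v hv t ht)).2.1,
        (hzprop v hv t (hτ₁le v hv t ht)).2.2.1⟩⟩, ?_, (hzvel v hv).hasDerivWithinAt⟩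
    -- uniqueness
    rintro w ⟨hwsm, hw0, hwzero⟩
    have hIccconn : IsPreconnected (Icc (0:ℝ) τ₁) := isPreconnected_Icc
    haveI : PreconnectedSpace (Icc (0:ℝ) τ₁) := Subtype.preconnectedSpace hIccconn
    set A : Set (Icc (0:ℝ) τ₁) := {x | w ↑x = zf v ↑x} with hA
    have hwc : Continuous fun x : Icc (0:ℝ) τ₁ => w ↑x := hwsm.continuousOn.restrict
    have hzc : Continuous fun x : Icc (0:ℝ) τ₁ => zf v ↑x :=
      ((hzsm v hv).mono hIccsub).continuousOn.restrict
    have hAeq : A = (fun x : Icc (0:ℝ) τ₁ => ((w ↑x, (↑x : ℝ)) : PP)) ⁻¹' (Uf v) := by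
      ext x
      constructor
      · intro hx
        show ((w ↑x, (↑x : ℝ)) : PP) ∈ Uf v
        rw [show (w ↑x) = zf v ↑x from hx]
        exact (hzprop v hv ↑x (hτ₁le v hv ↑x x.2)).1
      · intro hx
        have hzU := (hzprop v hv ↑x (hτ₁le v hv ↑x x.2)).1
        have hFeq : Fmap (φ j) (φ k) ((w ↑x, (↑x : ℝ)) : PP)
            = Fmap (φ j) (φ k) ((zf v ↑x, (↑x : ℝ)) : PP) := by
          obtain ⟨hw1, hw2⟩ := hwzero ↑x x.2
          have hz1 := (hzprop v hv ↑x (hτ₁le v hv ↑x x.2)).2.1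
          have hz2 := (hzprop v hv ↑x (hτ₁le v hv ↑x x.2)).2.2.1
          show (Psi (φ j) (φ k) _, _) = (Psi (φ j) (φ k) _, _)
          rw [(Psi_eq_zero_iff _ _ _).mpr ⟨hw1, hw2⟩, (Psi_eq_zero_iff _ _ _).mpr ⟨hz1, hz2⟩]
        have := hUinj v hv _ hx _ hzU hFeq
        exact congrArg Prod.fst this
    have hAopen : IsOpen A := by
      rw [hAeq]
      exact (hUopen v hv).preimage (hwc.prodMk continuous_subtype_val)
    have hAclosed : IsClosed A := isClosed_eq hwc hzc
    have hAne : A.Nonempty := by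
      refine ⟨⟨0, ⟨le_refl 0, le_of_lt hτ₁pos⟩⟩, ?_⟩
      show w 0 = zf v 0
      rw [hw0, hz0 v hv]
    have hAuniv : A = univ := IsClopen.eq_univ ⟨hAclosed, hAopen⟩ hAne
    intro t ht
    have : (⟨t, ht⟩ : Icc (0:ℝ) τ₁) ∈ A := by rw [hAuniv]; trivial
    exact this
  · -- decomposition
    intro t ht
    ext x
    constructor
    · intro hx
      have ht2 : t ∈ Icc (0:ℝ) τ₂ := ⟨ht.1, le_trans ht.2 (min_le_right _ _)⟩
      obtain ⟨v, hv, rfl⟩ := hfw t ht2 x hx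
      exact mem_iUnion₂.mpr ⟨v, hv, rfl⟩
    · intro hx
      obtain ⟨v, hv, hxv⟩ := mem_iUnion₂.mp hx
      rw [mem_singleton_iff] at hxv
      subst hxv
      have htI := hτ₁le v hv t ht
      obtain ⟨_, hz1, hz2, hz3⟩ := hzprop v hv t htI
      exact ⟨mem_Mset_pair.mpr ⟨hz1, hz2⟩, hz3⟩
end
end

section
/- Suppose Assumptions (A1) and (A3) hold. Then the set M² ∩ closure(V_𝒦) is finite and there exist τ₁ > 0 and r > 0 with the following properties: for every v ∈ M² ∩ closure(V_𝒦) there is a smooth function z_v : [0,τ₁] → ℝ² with z_v(0) = v which satisfies Φ̂_I(z_v(t),t) = 0 for the unique two-element subset I ⊆ 𝒦 with v ∈ M_I, such that M²(t) ∩ closure(V_𝒦(t)) = ⋃_{v ∈ M² ∩ closure(V_𝒦)} {z_v(t)} for all t ∈ [0,τ₁]; moreover ‖z_v(t) − v‖ < r for all t ∈ [0,τ₁] and all such v, and the open balls of radius r centered at distinct points v, w ∈ M² ∩ closure(V_𝒦) are disjoint. -/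
open Set Metric
open scoped ENNReal NNReal RealInnerProductSpace

noncomputable section

abbrev joint (f : Plane → ℝ → ℝ) : Plane × ℝ → ℝ := fun p => f p.1 p.2

lemma one_le_smooth : ((⊤:ℕ∞) : WithTop ℕ∞) ≠ 0 := by simp

lemma gradX_eq_fderiv {f : Plane → ℝ → ℝ} (hf : ContDiff ℝ (⊤ : ℕ∞) (joint f))
    (x : Plane) (t : ℝ) (i : Fin 2) :
    gradX f x t i
      = fderiv ℝ (joint f) (x, t) (EuclideanSpace.single i 1, 0) := by
  have h1 : HasFDerivAt (fun y : Plane => f y t)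
      ((fderiv ℝ (joint f) (x, t)).comp (ContinuousLinearMap.inl ℝ Plane ℝ)) x := by
    exact ((hf.differentiable one_le_smooth (x, t)).hasFDerivAt).comp x
      (hasFDerivAt_prodMk_left (𝕜 := ℝ) x t)
  have h2 : gradX f x t = (InnerProductSpace.toDual ℝ Plane).symm
      ((fderiv ℝ (joint f) (x, t)).comp (ContinuousLinearMap.inl ℝ Plane ℝ)) := by
    rw [gradX, gradient, h1.fderiv]
  have h3 : gradX f x t i = ⟪gradX f x t, EuclideanSpace.single i (1:ℝ)⟫ := by
    rw [EuclideanSpace.inner_single_right]; simp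
  rw [h3, h2, InnerProductSpace.toDual_symm_apply]
  simp


lemma detDx_eq {f g : Plane → ℝ → ℝ} (hf : ContDiff ℝ (⊤ : ℕ∞) (joint f))
    (hg : ContDiff ℝ (⊤ : ℕ∞) (joint g)) (x : Plane) (t : ℝ) :
    (DxMat f g x t).det
      = fderiv ℝ (joint f) (x, t) (EuclideanSpace.single 0 1, 0)
          * fderiv ℝ (joint g) (x, t) (EuclideanSpace.single 1 1, 0)
        - fderiv ℝ (joint f) (x, t) (EuclideanSpace.single 1 1, 0)
          * fderiv ℝ (joint g) (x, t) (EuclideanSpace.single 0 1, 0) := by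
  rw [DxMat, Matrix.det_fin_two_of, gradX_eq_fderiv hf, gradX_eq_fderiv hf,
    gradX_eq_fderiv hg, gradX_eq_fderiv hg]

lemma continuous_detDx {f g : Plane → ℝ → ℝ} (hf : ContDiff ℝ (⊤ : ℕ∞) (joint f))
    (hg : ContDiff ℝ (⊤ : ℕ∞) (joint g)) :
    Continuous (fun p : Plane × ℝ => (DxMat f g p.1 p.2).det) := by
  have h : ∀ {h : Plane → ℝ → ℝ}, ContDiff ℝ (⊤ : ℕ∞) (joint h) → ∀ w : Plane × ℝ,
      Continuous (fun p : Plane × ℝ => fderiv ℝ (joint h) p w) := fun hh w =>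
    (hh.continuous_fderiv one_le_smooth).clm_apply continuous_const
  have e : (fun p : Plane × ℝ => (DxMat f g p.1 p.2).det)
      = fun p => fderiv ℝ (joint f) p (EuclideanSpace.single 0 1, 0)
          * fderiv ℝ (joint g) p (EuclideanSpace.single 1 1, 0)
        - fderiv ℝ (joint f) p (EuclideanSpace.single 1 1, 0)
          * fderiv ℝ (joint g) p (EuclideanSpace.single 0 1, 0) := by
    funext p; exact detDx_eq hf hg p.1 p.2
  rw [e]
  exact ((h hf _).mul (h hg _)).sub ((h hf _).mul (h hg _))

lemma plane_decomp (u : Plane) :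
    u = u 0 • EuclideanSpace.single 0 (1:ℝ) + u 1 • EuclideanSpace.single 1 (1:ℝ) := by
  ext i
  fin_cases i <;> simp [EuclideanSpace.single_apply]

lemma exists_cle {f g : Plane → ℝ → ℝ} (hf : ContDiff ℝ (⊤ : ℕ∞) (joint f))
    (hg : ContDiff ℝ (⊤ : ℕ∞) (joint g)) (p : Plane × ℝ)
    (hdet : (DxMat f g p.1 p.2).det ≠ 0) :
    ∃ A : (Plane × ℝ) ≃L[ℝ] ℝ × ℝ × ℝ,
      (A : (Plane × ℝ) →L[ℝ] ℝ × ℝ × ℝ)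
        = (fderiv ℝ (joint f) p).prod
            ((fderiv ℝ (joint g) p).prod (ContinuousLinearMap.snd ℝ Plane ℝ)) := by
  set L := (fderiv ℝ (joint f) p).prod
      ((fderiv ℝ (joint g) p).prod (ContinuousLinearMap.snd ℝ Plane ℝ)) with hL
  have hinj : Function.Injective L := by
    rw [injective_iff_map_eq_zero]
    rintro ⟨u, s⟩ hq
    have h1 : fderiv ℝ (joint f) p (u, s) = 0 := congrArg Prod.fst hq
    have h2 : fderiv ℝ (joint g) p (u, s) = 0 := congrArg (fun z => z.2.1) hq
    have h3 : s = 0 := congrArg (fun z => z.2.2) hq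
    subst h3
    have hu : (u, (0:ℝ)) = u 0 • ((EuclideanSpace.single 0 (1:ℝ), (0:ℝ)) : Plane × ℝ)
        + u 1 • (EuclideanSpace.single 1 (1:ℝ), (0:ℝ)) := by
      have := plane_decomp u
      refine Prod.ext ?_ (by simp)
      simpa using this
    set a := fderiv ℝ (joint f) p (EuclideanSpace.single 0 1, 0)
    set b := fderiv ℝ (joint f) p (EuclideanSpace.single 1 1, 0)
    set c := fderiv ℝ (joint g) p (EuclideanSpace.single 0 1, 0)
    set d := fderiv ℝ (joint g) p (EuclideanSpace.single 1 1, 0)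
    have e1 : u 0 * a + u 1 * b = 0 := by
      rw [hu, map_add, map_smul, map_smul] at h1; simpa [a, b, smul_eq_mul] using h1
    have e2 : u 0 * c + u 1 * d = 0 := by
      rw [hu, map_add, map_smul, map_smul] at h2; simpa [c, d, smul_eq_mul] using h2
    have hD : a * d - b * c ≠ 0 := by rw [detDx_eq hf hg] at hdet; exact hdet
    have hu0 : u 0 = 0 := by
      have : (a * d - b * c) * u 0 = d * (u 0 * a + u 1 * b) - b * (u 0 * c + u 1 * d) := by
        ring
      rw [e1, e2] at this
      simp at this
      rcases this with h | h
      · exact absurd h hD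
      · exact h
    have hu1 : u 1 = 0 := by
      have : (a * d - b * c) * u 1 = a * (u 0 * c + u 1 * d) - c * (u 0 * a + u 1 * b) := by
        ring
      rw [e1, e2] at this
      simp at this
      rcases this with h | h
      · exact absurd h hD
      · exact h
    have : u = 0 := by rw [plane_decomp u, hu0, hu1]; simp
    simp [this]
  have hrank : Module.finrank ℝ (Plane × ℝ) = Module.finrank ℝ (ℝ × ℝ × ℝ) := by
    simp [Module.finrank_prod, finrank_euclideanSpace_fin]
  have hsurj : Function.Surjective L :=
    (LinearMap.injective_iff_surjective_of_finrank_eq_finrank hrank).mp hinj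
  refine ⟨(LinearEquiv.ofBijective (L : (Plane × ℝ) →ₗ[ℝ] ℝ × ℝ × ℝ)
    ⟨hinj, hsurj⟩).toContinuousLinearEquiv, ?_⟩
  exact ContinuousLinearMap.ext fun q => rfl


lemma contPhiX {f : Plane → ℝ → ℝ} (hf : ContDiff ℝ (⊤ : ℕ∞) (joint f)) (t : ℝ) :
    Continuous fun y : Plane => f y t :=
  hf.continuous.comp (continuous_id.prodMk continuous_const)

/-- The corner lemma: a transversal crossing point of two active constraints, with all
other constraints strictly inactive, lies in the closure of the cell. -/
lemma corner_mem_closure_VK {φ : ℕ → Plane → ℝ → ℝ} {K : Finset ℕ}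
    (hs : SmoothData φ K) {x : Plane} {t : ℝ} {j k : ℕ}
    (hjK : j ∈ K) (hkK : k ∈ K)
    (hφj : φ j x t = 0) (hφk : φ k x t = 0)
    (hneg : ∀ m ∈ K, m ≠ j → m ≠ k → φ m x t < 0)
    (hdet : (DxMat (φ j) (φ k) x t).det ≠ 0) :
    x ∈ closure (VK φ K t) := by
  have hfj := hs j hjK
  have hfk := hs k hkK
  set a := fderiv ℝ (joint (φ j)) (x, t) (EuclideanSpace.single 0 1, 0) with ha
  set b := fderiv ℝ (joint (φ j)) (x, t) (EuclideanSpace.single 1 1, 0) with hb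
  set c := fderiv ℝ (joint (φ k)) (x, t) (EuclideanSpace.single 0 1, 0) with hc
  set d := fderiv ℝ (joint (φ k)) (x, t) (EuclideanSpace.single 1 1, 0) with hd
  have hD : a * d - b * c ≠ 0 := by rw [detDx_eq hfj hfk] at hdet; exact hdet
  set w : Plane := ((b - d) / (a * d - b * c)) • EuclideanSpace.single 0 (1:ℝ)
      + ((c - a) / (a * d - b * c)) • EuclideanSpace.single 1 (1:ℝ) with hw
  -- directional derivatives of φ j and φ k in direction w are -1
  have keyD : ∀ (f : Plane → ℝ → ℝ), ContDiff ℝ (⊤ : ℕ∞) (joint f) →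
      fderiv ℝ (joint f) (x, t) (w, 0)
        = (b - d) / (a * d - b * c) * fderiv ℝ (joint f) (x, t) (EuclideanSpace.single 0 1, 0)
          + (c - a) / (a * d - b * c) * fderiv ℝ (joint f) (x, t)
              (EuclideanSpace.single 1 1, 0) := by
    intro f hf
    have hsplit : ((w, (0:ℝ)) : Plane × ℝ)
        = ((b - d) / (a * d - b * c)) • ((EuclideanSpace.single 0 (1:ℝ), (0:ℝ)) : Plane × ℝ)
          + ((c - a) / (a * d - b * c)) • (EuclideanSpace.single 1 (1:ℝ), (0:ℝ)) := by
      refine Prod.ext (by simp [hw]) (by simp)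
    rw [hsplit, map_add, map_smul, map_smul]; simp [smul_eq_mul]
  have hDj : fderiv ℝ (joint (φ j)) (x, t) (w, 0) = -1 := by
    rw [keyD (φ j) hfj, ← ha, ← hb, div_mul_eq_mul_div, div_mul_eq_mul_div, ← add_div,
      div_eq_iff hD]; ring
  have hDk : fderiv ℝ (joint (φ k)) (x, t) (w, 0) = -1 := by
    rw [keyD (φ k) hfk, ← hc, ← hd, div_mul_eq_mul_div, div_mul_eq_mul_div, ← add_div,
      div_eq_iff hD]; ring
  -- for each m ∈ K, eventually along 𝓝[>] 0, φ m (x + s • w) t < 0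
  have hvanish : ∀ m ∈ K, φ m x t = 0 → fderiv ℝ (joint (φ m)) (x, t) (w, 0) = -1 →
      ∀ᶠ s in nhdsWithin (0:ℝ) (Ioi 0), φ m (x + s • w) t < 0 := by
    intro m hmK hm0 hmD
    have hcurve : HasDerivAt (fun s : ℝ => ((x + s • w, t) : Plane × ℝ)) ((w, 0)) 0 := by
      have := (((hasDerivAt_id (0:ℝ)).smul_const w).const_add x).prodMk (hasDerivAt_const 0 t)
      simpa using this
    have hψ : HasDerivAt (fun s : ℝ => φ m (x + s • w) t) (-1) 0 := by
      have := (((hs m hmK).differentiable one_le_smooth (x + (0:ℝ) • w, t)).hasFDerivAt.comp_hasDerivAt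
        (0:ℝ) hcurve)
      simpa [hm0, hmD, Function.comp_def] using this
    have hslope := hasDerivAt_iff_tendsto_slope.mp hψ
    have hslope' : Filter.Tendsto (slope (fun s : ℝ => φ m (x + s • w) t) 0)
        (nhdsWithin 0 (Ioi 0)) (nhds (-1)) :=
      hslope.mono_left (nhdsWithin_mono 0 (fun s hs => ne_of_gt hs))
    have hev : ∀ᶠ s in nhdsWithin (0:ℝ) (Ioi 0),
        slope (fun s : ℝ => φ m (x + s • w) t) 0 s < 0 :=
      hslope'.eventually_lt_const (by norm_num)
    filter_upwards [hev, self_mem_nhdsWithin] with s hs1 hs2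
    rw [slope_def_field] at hs1
    simp only [sub_zero] at hs1
    have hs2' : (0:ℝ) < s := hs2
    have : φ m (x + s • w) t - φ m (x + (0:ℝ) • w) t < 0 := by
      have := (div_neg_iff.mp hs1)
      rcases this with ⟨h1, h2⟩ | ⟨h1, h2⟩
      · linarith
      · linarith
    simpa [hm0] using this
  have hstay : ∀ m ∈ K, ∀ᶠ s in nhdsWithin (0:ℝ) (Ioi 0), φ m (x + s • w) t < 0 := by
    intro m hmK
    by_cases hmj : m = j
    · subst hmj; exact hvanish m hmK hφj hDj
    by_cases hmk : m = k
    · subst hmk; exact hvanish m hmK hφk hDk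
    · have hcont : ContinuousAt (fun s : ℝ => φ m (x + s • w) t) 0 :=
        ((contPhiX (hs m hmK) t).comp (by fun_prop)).continuousAt
      have : ∀ᶠ s in nhds (0:ℝ), φ m (x + s • w) t < 0 := by
        have hlt : φ m (x + (0:ℝ) • w) t < 0 := by simpa using hneg m hmK hmj hmk
        exact hcont.eventually_lt_const hlt
      exact this.filter_mono nhdsWithin_le_nhds
  have hall : ∀ᶠ s in nhdsWithin (0:ℝ) (Ioi 0), ∀ m ∈ K, φ m (x + s • w) t < 0 :=
    (Filter.eventually_all_finset K).mpr hstay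
  have hmem : ∀ᶠ s in nhdsWithin (0:ℝ) (Ioi 0), (x + s • w) ∈ VK φ K t := by
    filter_upwards [hall] with s hsall
    refine Set.mem_iInter₂.mpr fun m hmK => ?_
    have hopen : IsOpen {y : Plane | φ m y t < 0} :=
      isOpen_lt (contPhiX (hs m hmK) t) continuous_const
    have hsub : {y : Plane | φ m y t < 0} ⊆ omegaK φ m t :=
      interior_maximal (fun y (hy : φ m y t < 0) => (le_of_lt hy : φ m y t ≤ 0)) hopen
    exact hsub (hsall m hmK)
  have htend : Filter.Tendsto (fun s : ℝ => x + s • w) (nhdsWithin (0:ℝ) (Ioi 0)) (nhds x) := by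
    have : Filter.Tendsto (fun s : ℝ => x + s • w) (nhds 0) (nhds x) := by
      have hc : Continuous (fun s : ℝ => x + s • w) := by fun_prop
      have := hc.tendsto 0
      simpa using this
    exact this.mono_left nhdsWithin_le_nhds
  exact mem_closure_of_tendsto htend hmem

set_option maxHeartbeats 1000000 in
/-- Per-vertex package: local curve of crossing points, uniqueness, sign and
determinant control on a product neighbourhood. -/
lemma vertex_package {φ : ℕ → Plane → ℝ → ℝ} {K : Finset ℕ}
    (hs : SmoothData φ K) {j k : ℕ} (hjK : j ∈ K) (hkK : k ∈ K)
    {v : Plane} (hφj : φ j v 0 = 0) (hφk : φ k v 0 = 0)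
    (hneg0 : ∀ m ∈ K, m ≠ j → m ≠ k → φ m v 0 < 0)
    (hdet0 : (DxMat (φ j) (φ k) v 0).det ≠ 0) :
    ∃ ε > 0, ∃ δ > 0, δ ≤ ε ∧ ∃ ζ : ℝ → Plane,
      ζ 0 = v ∧
      (∀ x ∈ ball v ε, ∀ t ∈ Ioo (-ε) ε, ∀ m ∈ K, m ≠ j → m ≠ k → φ m x t < 0) ∧
      (∀ x ∈ ball v ε, ∀ t ∈ Ioo (-ε) ε, (DxMat (φ j) (φ k) x t).det ≠ 0) ∧
      (∀ t ∈ Ioo (-δ) δ, ζ t ∈ ball v ε ∧ φ j (ζ t) t = 0 ∧ φ k (ζ t) t = 0 ∧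
        ContDiffAt ℝ (⊤:ℕ∞) ζ t) ∧
      (∀ t ∈ Ioo (-δ) δ, ∀ x ∈ ball v ε, φ j x t = 0 → φ k x t = 0 → x = ζ t) := by
  classical
  have hfj := hs j hjK
  have hfk := hs k hkK
  set G : Plane × ℝ → ℝ × ℝ × ℝ := fun p => (φ j p.1 p.2, φ k p.1 p.2, p.2) with hGdef
  have hG : ContDiff ℝ (⊤:ℕ∞) G := hfj.prodMk (hfk.prodMk contDiff_snd)
  obtain ⟨A, hA⟩ := exists_cle hfj hfk (v, 0) hdet0
  have hF : HasFDerivAt G (A : (Plane × ℝ) →L[ℝ] ℝ × ℝ × ℝ) (v, 0) := by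
    rw [hA]
    exact ((hfj.differentiable one_le_smooth (v,0)).hasFDerivAt).prodMk
      (((hfk.differentiable one_le_smooth (v,0)).hasFDerivAt).prodMk
        ((ContinuousLinearMap.snd ℝ Plane ℝ).hasFDerivAt))
  set Ψ := hG.contDiffAt.toOpenPartialHomeomorph G hF one_le_smooth with hΨdef
  have hΨcoe : (Ψ : Plane × ℝ → ℝ × ℝ × ℝ) = G := rfl
  have hvsrc : (v, 0) ∈ Ψ.source :=
    hG.contDiffAt.mem_toOpenPartialHomeomorph_source hF one_le_smooth
  have hG0 : G (v, 0) = ((0,0,0) : ℝ × ℝ × ℝ) := by simp [hGdef, hφj, hφk]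
  have htgt0 : ((0,0,0) : ℝ × ℝ × ℝ) ∈ Ψ.target := by
    rw [← hG0]
    exact hG.contDiffAt.image_mem_toOpenPartialHomeomorph_target hF one_le_smooth
  -- the good open set
  set U : Set (Plane × ℝ) := Ψ.source ∩ {p | (DxMat (φ j) (φ k) p.1 p.2).det ≠ 0}
      ∩ {p | ∀ m ∈ K, m ≠ j → m ≠ k → φ m p.1 p.2 < 0} with hUdef
  have hUopen : IsOpen U := by
    refine (Ψ.open_source.inter ?_).inter ?_
    · exact isOpen_compl_singleton.preimage (continuous_detDx hfj hfk)
    · have : {p : Plane × ℝ | ∀ m ∈ K, m ≠ j → m ≠ k → φ m p.1 p.2 < 0}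
          = ⋂ m ∈ K, {p : Plane × ℝ | m ≠ j → m ≠ k → φ m p.1 p.2 < 0} := by
        ext p; simp [Set.mem_iInter₂]
      rw [this]
      refine isOpen_biInter_finset fun m hm => ?_
      by_cases hmj : m = j
      · simp [hmj]
      by_cases hmk : m = k
      · have : {p : Plane × ℝ | m ≠ j → m ≠ k → φ m p.1 p.2 < 0} = univ := by
          ext p; simp [hmk]
        rw [this]; exact isOpen_univ
      · have : {p : Plane × ℝ | m ≠ j → m ≠ k → φ m p.1 p.2 < 0}
            = {p : Plane × ℝ | φ m p.1 p.2 < 0} := by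
          ext p; simp [hmj, hmk]
        rw [this]
        exact isOpen_lt (hs m hm).continuous continuous_const
  have hvU : (v, 0) ∈ U := ⟨⟨hvsrc, hdet0⟩, fun m hm h1 h2 => hneg0 m hm h1 h2⟩
  obtain ⟨ε, hε, hballU⟩ := Metric.mem_nhds_iff.mp (hUopen.mem_nhds hvU)
  have hprodU : ball v ε ×ˢ Ioo (-ε) ε ⊆ U := by
    intro p hp
    apply hballU
    rw [← ball_prod_same]
    refine ⟨hp.1, ?_⟩
    have : p.2 ∈ Ioo (-ε) ε := hp.2
    rw [Real.ball_eq_Ioo]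
    simpa using this
  set ζ : ℝ → Plane := fun t => (Ψ.symm ((0,0,t) : ℝ × ℝ × ℝ)).1 with hζdef
  have hζ0 : ζ 0 = v := by
    have h0 : Ψ.symm ((0,0,0) : ℝ × ℝ × ℝ) = (v, 0) := by
      rw [← hG0, ← hΨcoe]
      exact Ψ.left_inv hvsrc
    show (Ψ.symm ((0,0,(0:ℝ)) : ℝ × ℝ × ℝ)).1 = v
    rw [h0]
  -- choose δ
  have hcurve_cont : Continuous (fun t : ℝ => ((0,0,t) : ℝ × ℝ × ℝ)) := by fun_prop
  have hev1 : ∀ᶠ t in nhds (0:ℝ), ((0,0,t) : ℝ × ℝ × ℝ) ∈ Ψ.target := by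
    have := hcurve_cont.continuousAt (x := (0:ℝ))
    exact this.eventually_mem (Ψ.open_target.mem_nhds htgt0)
  have hsymm_cont : ContinuousAt Ψ.symm ((0,0,0) : ℝ × ℝ × ℝ) :=
    Ψ.continuousAt_symm htgt0
  have hev2 : ∀ᶠ t in nhds (0:ℝ), (Ψ.symm ((0,0,t) : ℝ × ℝ × ℝ)).1 ∈ ball v ε := by
    have hcc : ContinuousAt (Ψ.symm ∘ (fun t : ℝ => ((0,0,t) : ℝ × ℝ × ℝ))) 0 :=
      ContinuousAt.comp (by simpa using hsymm_cont) hcurve_cont.continuousAt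
    have hc : ContinuousAt (fun t : ℝ => (Ψ.symm ((0,0,t) : ℝ × ℝ × ℝ)).1) 0 := hcc.fst
    apply hc.eventually_mem
    have : (Ψ.symm ((0,0,0) : ℝ × ℝ × ℝ)).1 = v := hζ0
    rw [this]
    exact isOpen_ball.mem_nhds (mem_ball_self hε)
  obtain ⟨δ₀, hδ₀, hδ₀prop⟩ := Metric.eventually_nhds_iff.mp (hev1.and hev2)
  refine ⟨ε, hε, min δ₀ ε, lt_min hδ₀ hε, min_le_right _ _, ζ, hζ0, ?_, ?_, ?_, ?_⟩
  · intro x hx t ht m hm h1 h2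
    have hU' := hprodU (Set.mk_mem_prod hx ht)
    rw [hUdef] at hU'
    exact hU'.2 m hm h1 h2
  · intro x hx t ht
    have hU' := hprodU (Set.mk_mem_prod hx ht)
    rw [hUdef] at hU'
    exact hU'.1.2
  · intro t ht
    have htδ : |t| < δ₀ := by
      rw [abs_lt]; constructor
      · exact lt_of_le_of_lt (neg_le_neg (min_le_left _ _)) ht.1
      · exact lt_of_lt_of_le ht.2 (min_le_left _ _)
    have hkey := hδ₀prop (y := t) (by simpa [Real.dist_eq] using htδ)
    obtain ⟨httgt, hζball⟩ := hkey
    have hri : Ψ ((Ψ.symm ((0,0,t) : ℝ × ℝ × ℝ))) = ((0,0,t) : ℝ × ℝ × ℝ) :=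
      Ψ.right_inv httgt
    have hsnd : (Ψ.symm ((0,0,t) : ℝ × ℝ × ℝ)).2 = t := by
      have := congrArg (fun q : ℝ × ℝ × ℝ => q.2.2) hri
      simpa [hΨcoe, hGdef] using this
    have hφjz : φ j (ζ t) t = 0 := by
      have := congrArg (fun q : ℝ × ℝ × ℝ => q.1) hri
      simp only [hΨcoe, hGdef] at this
      rw [hsnd] at this
      simpa [hζdef] using this
    have hφkz : φ k (ζ t) t = 0 := by
      have := congrArg (fun q : ℝ × ℝ × ℝ => q.2.1) hri
      simp only [hΨcoe, hGdef] at this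
      rw [hsnd] at this
      simpa [hζdef] using this
    have htε : t ∈ Ioo (-ε) ε := ⟨lt_of_le_of_lt (neg_le_neg (min_le_right _ _)) ht.1,
      lt_of_lt_of_le ht.2 (min_le_right _ _)⟩
    refine ⟨hζball, hφjz, hφkz, ?_⟩
    -- smoothness via the inverse function theorem at (ζ t, t)
    have hζt_pair : Ψ.symm ((0,0,t) : ℝ × ℝ × ℝ) = (ζ t, t) := by
      refine Prod.ext rfl hsnd
    have hζU := hprodU (Set.mk_mem_prod hζball htε)
    rw [hUdef] at hζU
    obtain ⟨A', hA'⟩ := exists_cle hfj hfk (ζ t, t) hζU.1.2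
    have hF' : HasFDerivAt G (A' : (Plane × ℝ) →L[ℝ] ℝ × ℝ × ℝ) (ζ t, t) := by
      rw [hA']
      exact ((hfj.differentiable one_le_smooth _).hasFDerivAt).prodMk
        (((hfk.differentiable one_le_smooth _).hasFDerivAt).prodMk
          ((ContinuousLinearMap.snd ℝ Plane ℝ).hasFDerivAt))
    have hsymm_smooth : ContDiffAt ℝ (⊤:ℕ∞) Ψ.symm ((0,0,t) : ℝ × ℝ × ℝ) := by
      apply Ψ.contDiffAt_symm httgt
      · rw [hζt_pair]; exact hF'
      · rw [hζt_pair]; exact hG.contDiffAt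
    have hcurve_smooth : ContDiffAt ℝ (⊤:ℕ∞) (fun s : ℝ => ((0,0,s) : ℝ × ℝ × ℝ)) t :=
      (contDiff_const.prodMk (contDiff_const.prodMk contDiff_id)).contDiffAt
    exact (contDiff_fst.contDiffAt).comp _ (hsymm_smooth.comp t hcurve_smooth)
  · intro t ht x hx hφjx hφkx
    have htδ : |t| < δ₀ := by
      rw [abs_lt]; constructor
      · exact lt_of_le_of_lt (neg_le_neg (min_le_left _ _)) ht.1
      · exact lt_of_lt_of_le ht.2 (min_le_left _ _)
    obtain ⟨httgt, hζball⟩ := hδ₀prop (y := t) (by simpa [Real.dist_eq] using htδ)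
    have hsnd : (Ψ.symm ((0,0,t) : ℝ × ℝ × ℝ)).2 = t := by
      have := congrArg (fun q : ℝ × ℝ × ℝ => q.2.2) (Ψ.right_inv httgt)
      simpa [hΨcoe, hGdef] using this
    have hζt_pair : Ψ.symm ((0,0,t) : ℝ × ℝ × ℝ) = (ζ t, t) := Prod.ext rfl hsnd
    have htε : t ∈ Ioo (-ε) ε := ⟨lt_of_le_of_lt (neg_le_neg (min_le_right _ _)) ht.1,
      lt_of_lt_of_le ht.2 (min_le_right _ _)⟩
    have hxU := hprodU (Set.mk_mem_prod hx htε)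
    rw [hUdef] at hxU
    have hxsrc : ((x, t) : Plane × ℝ) ∈ Ψ.source := hxU.1.1
    have hζsrc : ((ζ t, t) : Plane × ℝ) ∈ Ψ.source := by
      rw [← hζt_pair]; exact Ψ.map_target httgt
    have hGeq : G (x, t) = G (ζ t, t) := by
      have : G (ζ t, t) = ((0,0,t) : ℝ × ℝ × ℝ) := by
        rw [← hζt_pair, ← hΨcoe]
        exact Ψ.right_inv httgt
      rw [this]
      simp [hGdef, hφjx, hφkx]
    have := Ψ.injOn hxsrc hζsrc (by rw [hΨcoe]; exact hGeq)
    exact congrArg Prod.fst this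


lemma closure_VK_subset {φ : ℕ → Plane → ℝ → ℝ} {K : Finset ℕ}
    (hs : SmoothData φ K) {m : ℕ} (hm : m ∈ K) (t : ℝ) :
    closure (VK φ K t) ⊆ {x | φ m x t ≤ 0} := by
  refine closure_minimal ?_ (isClosed_le (contPhiX (hs m hm) t) continuous_const)
  intro x hx
  have : x ∈ omegaK φ m t := Set.mem_iInter₂.mp hx m hm
  exact interior_subset this

/-- Structure of a point where two constraints vanish and the rest are `≤ 0`. -/
lemma vertex_structure {φ : ℕ → Plane → ℝ → ℝ} {K : Finset ℕ}
    (hA3 : AssumpRank φ K) {x : Plane}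
    (hx : x ∈ Mr φ K 2 0) (hle : ∀ m ∈ K, φ m x 0 ≤ 0) :
    ∃ j k, j ∈ K ∧ k ∈ K ∧ j ≠ k ∧ φ j x 0 = 0 ∧ φ k x 0 = 0 ∧
      (∀ m ∈ K, m ≠ j → m ≠ k → φ m x 0 < 0) ∧
      (DxMat (φ j) (φ k) x 0).det ≠ 0 := by
  obtain ⟨I, hI, hxI⟩ := Set.mem_iUnion₂.mp hx
  obtain ⟨hIK, hIcard⟩ := hI
  obtain ⟨j, k, hjk, rfl⟩ := Finset.card_eq_two.mp hIcard
  have hjK : j ∈ K := hIK (by simp)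
  have hkK : k ∈ K := hIK (by simp)
  have hφj : φ j x 0 = 0 := hxI j (by simp)
  have hφk : φ k x 0 = 0 := hxI k (by simp)
  have hneg : ∀ m ∈ K, m ≠ j → m ≠ k → φ m x 0 < 0 := by
    intro m hmK hmj hmk
    rcases lt_or_eq_of_le (hle m hmK) with h | h
    · exact h
    · exfalso
      have hx3 : x ∈ Mr φ K 3 0 := by
        refine Set.mem_iUnion₂.mpr ⟨insert m {j, k}, ⟨?_, ?_⟩, ?_⟩
        · intro a ha
          rcases Finset.mem_insert.mp ha with rfl | ha
          · exact hmK
          · rcases Finset.mem_insert.mp ha with rfl | ha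
            · exact hjK
            · rw [Finset.mem_singleton.mp ha]; exact hkK
        · rw [Finset.card_insert_of_notMem (by simp [hmj, hmk]), hIcard]
        · intro a ha
          rcases Finset.mem_insert.mp ha with rfl | ha
          · exact h
          · exact hxI a ha
      rw [hA3.2] at hx3
      exact hx3
  exact ⟨j, k, hjK, hkK, hjk, hφj, hφk, hneg, hA3.1 j hjK k hkK hjk x hφj hφk⟩

lemma isClosed_Mset {φ : ℕ → Plane → ℝ → ℝ} {K : Finset ℕ}
    (hs : SmoothData φ K) {I : Finset ℕ} (hIK : I ⊆ K) (t : ℝ) :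
    IsClosed (Mset φ I t) := by
  have : Mset φ I t = ⋂ m ∈ I, {x : Plane | φ m x t = 0} := by
    ext x; simp [Mset, Set.mem_iInter₂]
  rw [this]
  exact isClosed_biInter fun m hm =>
    isClosed_eq (contPhiX (hs m (hIK hm)) t) continuous_const

lemma isClosed_Mr {φ : ℕ → Plane → ℝ → ℝ} {K : Finset ℕ}
    (hs : SmoothData φ K) (n : ℕ) (t : ℝ) :
    IsClosed (Mr φ K n t) := by
  have hfin : {I : Finset ℕ | I ⊆ K ∧ I.card = n}.Finite := by
    refine Set.Finite.subset K.powerset.finite_toSet ?_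
    intro I hI
    simpa [Finset.mem_powerset] using hI.1
  exact hfin.isClosed_biUnion fun I hI => isClosed_Mset hs hI.1 t

lemma finite_of_isolated {S : Set Plane} (hc : IsCompact S)
    (h : ∀ v ∈ S, ∃ U ∈ nhds v, ∀ x ∈ S ∩ U, x = v) : S.Finite := by
  choose U hU hUiso using h
  obtain ⟨F, hcover⟩ := hc.elim_nhds_subcover' (fun v hv => U v hv) (fun v hv => hU v hv)
  refine Set.Finite.subset (Set.Finite.image (fun p : ↥S => (p : Plane)) F.finite_toSet) ?_
  intro x hx
  obtain ⟨v, hvmem, hxv⟩ := Set.mem_iUnion₂.mp (hcover hx)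
  have : x = (v : Plane) := hUiso v v.2 x ⟨hx, by simpa using hxv⟩
  exact ⟨v, by simpa using hvmem, this.symm⟩

lemma exists_pos_forall_finite {α : Type*} {S : Set α} (hS : S.Finite) (P : α → ℝ → Prop)
    (h : ∀ v ∈ S, ∃ ε > 0, ∀ ε', 0 < ε' → ε' ≤ ε → P v ε') :
    ∃ ε > 0, ∀ v ∈ S, P v ε := by
  classical
  choose! ε hεpos hP using h
  rcases (hS.toFinset).eq_empty_or_nonempty with hF | hF
  · refine ⟨1, one_pos, fun v hv => ?_⟩
    exfalso
    have : v ∈ hS.toFinset := hS.mem_toFinset.mpr hv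
    simp [hF] at this
  · refine ⟨(hS.toFinset).inf' hF ε, ?_, ?_⟩
    · rw [gt_iff_lt, Finset.lt_inf'_iff]
      exact fun v hv => hεpos v (hS.mem_toFinset.mp hv)
    · intro v hv
      refine hP v hv _ ?_ (Finset.inf'_le ε (hS.mem_toFinset.mpr hv))
      rw [Finset.lt_inf'_iff]
      exact fun w hw => hεpos w (hS.mem_toFinset.mp hw)

lemma S_finite {φ : ℕ → Plane → ℝ → ℝ} {K : Finset ℕ}
    (hs : SmoothData φ K) (hA1 : AssumpBounded φ K) (hA3 : AssumpRank φ K) :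
    (Mr φ K 2 0 ∩ closure (VK φ K 0)).Finite := by
  obtain ⟨τ₀, hτ₀, k₀, hk₀, c, R, hR, hball⟩ := hA1
  set S := Mr φ K 2 0 ∩ closure (VK φ K 0) with hSdef
  have hSsub : S ⊆ closedBall c R := by
    intro x hx
    have h2 : closure (VK φ K 0) ⊆ closure (omegaK φ k₀ 0) :=
      closure_mono (fun y hy => Set.mem_iInter₂.mp hy k₀ hk₀)
    exact ball_subset_closedBall (hball 0 ⟨le_refl 0, le_of_lt hτ₀⟩ (h2 hx.2))
  have hSclosed : IsClosed S := (isClosed_Mr hs 2 0).inter isClosed_closure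
  have hScompact := (isCompact_closedBall c R).of_isClosed_subset hSclosed hSsub
  refine finite_of_isolated hScompact ?_
  intro v hv
  have hle : ∀ m ∈ K, φ m v 0 ≤ 0 := fun m hm => closure_VK_subset hs hm 0 hv.2
  obtain ⟨j, k, hjK, hkK, hjk, hφj, hφk, hneg, hdet⟩ := vertex_structure hA3 hv.1 hle
  obtain ⟨ε, hε, δ, hδ, hδε, ζ, hζ0, hnegU, hdetU, hcurve, huniq⟩ :=
    vertex_package hs hjK hkK hφj hφk hneg hdet
  refine ⟨ball v ε, isOpen_ball.mem_nhds (mem_ball_self hε), ?_⟩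
  rintro x ⟨hxS, hxball⟩
  obtain ⟨j', k', hj'K, hk'K, hj'k', hφj', hφk', _, _⟩ :=
    vertex_structure hA3 hxS.1 (fun m hm => closure_VK_subset hs hm 0 hxS.2)
  have h0ε : (0:ℝ) ∈ Ioo (-ε) ε := ⟨neg_lt_zero.mpr hε, hε⟩
  have hmem' : ∀ m, m ∈ K → φ m x 0 = 0 → m = j ∨ m = k := by
    intro m hm hm0
    by_contra hcon
    push_neg at hcon
    exact absurd hm0 (ne_of_lt (hnegU x hxball 0 h0ε m hm hcon.1 hcon.2))
  have hjx : φ j x 0 = 0 := by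
    by_contra hne
    have hjj' : j' ≠ j := fun h => hne (h ▸ hφj')
    have hjk' : k' ≠ j := fun h => hne (h ▸ hφk')
    have h1 := (hmem' j' hj'K hφj').resolve_left hjj'
    have h2 := (hmem' k' hk'K hφk').resolve_left hjk'
    exact hj'k' (h1.trans h2.symm)
  have hkx : φ k x 0 = 0 := by
    by_contra hne
    have hjj' : j' ≠ k := fun h => hne (h ▸ hφj')
    have hjk' : k' ≠ k := fun h => hne (h ▸ hφk')
    have h1 := (hmem' j' hj'K hφj').resolve_right hjj'
    have h2 := (hmem' k' hk'K hφk').resolve_right hjk'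
    exact hj'k' (h1.trans h2.symm)
  have := huniq 0 ⟨neg_lt_zero.mpr hδ, hδ⟩ x hxball hjx hkx
  rw [this, hζ0]

set_option maxHeartbeats 1000000 in
/-- For small time, every vertex of the perturbed cell is near an original vertex. -/
lemma good_small_time {φ : ℕ → Plane → ℝ → ℝ} {K : Finset ℕ}
    (hs : SmoothData φ K) (hA1 : AssumpBounded φ K) (hA3 : AssumpRank φ K)
    {r : ℝ} (hr : 0 < r) :
    ∃ τ > (0:ℝ), ∀ t, 0 ≤ t → t ≤ τ → ∀ x, x ∈ Mr φ K 2 t → x ∈ closure (VK φ K t) →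
      ∃ v ∈ Mr φ K 2 0 ∩ closure (VK φ K 0), x ∈ ball v r := by
  classical
  obtain ⟨τ₀, hτ₀, k₀, hk₀, c, R, hR, hball⟩ := hA1
  by_contra hcon
  push_neg at hcon
  have hseq : ∀ n : ℕ, ∃ t, (0 ≤ t ∧ t ≤ min τ₀ (1/(n+1))) ∧ ∃ x, x ∈ Mr φ K 2 t ∧
      x ∈ closure (VK φ K t) ∧
      ∀ v ∈ Mr φ K 2 0 ∩ closure (VK φ K 0), x ∉ ball v r := by
    intro n
    obtain ⟨t, ht0, htle, x, hxM, hxcl, hbad⟩ :=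
      hcon (min τ₀ (1/(n+1))) (lt_min hτ₀ (by positivity))
    exact ⟨t, ⟨ht0, htle⟩, x, hxM, hxcl, hbad⟩
  choose t ht xx hxM hxcl hxbad using hseq
  have ht0 : Filter.Tendsto t Filter.atTop (nhds 0) := by
    refine squeeze_zero (fun n => (ht n).1)
      (fun n => le_trans (ht n).2 (min_le_right _ _)) ?_
    exact tendsto_one_div_add_atTop_nhds_zero_nat
  have hpairex : ∀ n, ∃ I : Finset ℕ, (I ⊆ K ∧ I.card = 2) ∧ xx n ∈ Mset φ I (t n) := by
    intro n
    obtain ⟨I, hI, hmem⟩ := Set.mem_iUnion₂.mp (hxM n)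
    exact ⟨I, hI, hmem⟩
  choose Iseq hIseq hIm using hpairex
  have hxball : ∀ n, xx n ∈ closedBall c R := by
    intro n
    refine ball_subset_closedBall (hball (t n) ⟨(ht n).1, le_trans (ht n).2 (min_le_left _ _)⟩ ?_)
    exact closure_mono (fun y hy => Set.mem_iInter₂.mp hy k₀ hk₀) (hxcl n)
  obtain ⟨xbar, hxbarmem, g, hg, hxg⟩ := (isCompact_closedBall c R).tendsto_subseq hxball
  have hfib : ∃ I : Finset ℕ, (I ⊆ K ∧ I.card = 2) ∧ {n | Iseq (g n) = I}.Infinite := by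
    by_contra hfin
    push_neg at hfin
    have huniv : (Set.univ : Set ℕ).Finite := by
      have hcover : (Set.univ : Set ℕ)
          ⊆ ⋃ I ∈ (K.powerset : Finset (Finset ℕ)), {n | Iseq (g n) = I} := by
        intro n _
        exact Set.mem_iUnion₂.mpr ⟨Iseq (g n),
          Finset.mem_powerset.mpr (hIseq (g n)).1, rfl⟩
      refine Set.Finite.subset (Set.Finite.biUnion K.powerset.finite_toSet ?_) hcover
      intro I hI
      by_cases h2 : I ⊆ K ∧ I.card = 2
      · exact hfin I h2
      · have : {n | Iseq (g n) = I} = ∅ := by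
          ext n
          simp only [Set.mem_setOf_eq, Set.mem_empty_iff_false, iff_false]
          intro h
          exact h2 (h ▸ hIseq (g n))
        rw [this]; exact Set.finite_empty
    exact Set.infinite_univ huniv
  obtain ⟨I, ⟨hIK, hIcard⟩, hInf⟩ := hfib
  obtain ⟨j, k, hjk, rfl⟩ := Finset.card_eq_two.mp hIcard
  have hfreq : ∃ᶠ n in Filter.atTop, Iseq (g n) = {j, k} :=
    Nat.frequently_atTop_iff_infinite.mpr hInf
  have hpair_tend : Filter.Tendsto (fun n => ((xx (g n), t (g n)) : Plane × ℝ))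
      Filter.atTop (nhds (xbar, 0)) :=
    hxg.prodMk_nhds (ht0.comp hg.tendsto_atTop)
  have hphitend : ∀ m ∈ K, Filter.Tendsto (fun n => φ m (xx (g n)) (t (g n)))
      Filter.atTop (nhds (φ m xbar 0)) := by
    intro m hm
    exact ((hs m hm).continuous.tendsto ((xbar, 0) : Plane × ℝ)).comp hpair_tend
  have hj0 : φ j xbar 0 = 0 := by
    refine tendsto_nhds_unique_of_frequently_eq (hphitend j (hIK (by simp)))
      tendsto_const_nhds ?_
    refine hfreq.mono fun n hn => ?_
    have := hIm (g n)
    rw [hn] at this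
    exact this j (by simp)
  have hk0 : φ k xbar 0 = 0 := by
    refine tendsto_nhds_unique_of_frequently_eq (hphitend k (hIK (by simp)))
      tendsto_const_nhds ?_
    refine hfreq.mono fun n hn => ?_
    have := hIm (g n)
    rw [hn] at this
    exact this k (by simp)
  have hle : ∀ m ∈ K, φ m xbar 0 ≤ 0 := by
    intro m hm
    refine le_of_tendsto (hphitend m hm) (Filter.Eventually.of_forall fun n => ?_)
    exact closure_VK_subset hs hm (t (g n)) (hxcl (g n))
  have hxbarM : xbar ∈ Mr φ K 2 0 := by
    refine Set.mem_iUnion₂.mpr ⟨{j, k}, ⟨hIK, hIcard⟩, ?_⟩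
    intro m hm
    rcases Finset.mem_insert.mp hm with rfl | hm
    · exact hj0
    · rw [Finset.mem_singleton.mp hm]; exact hk0
  obtain ⟨j', k', hj'K, hk'K, hj'k', hφj', hφk', hneg', hdet'⟩ :=
    vertex_structure hA3 hxbarM hle
  have hxbarcl : xbar ∈ closure (VK φ K 0) :=
    corner_mem_closure_VK hs hj'K hk'K hφj' hφk' hneg' hdet'
  have hev : ∀ᶠ n in Filter.atTop, xx (g n) ∈ ball xbar r :=
    hxg.eventually_mem (isOpen_ball.mem_nhds (mem_ball_self hr))
  obtain ⟨n, hn⟩ := hev.exists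
  exact hxbad (g n) xbar ⟨hxbarM, hxbarcl⟩ hn


set_option maxHeartbeats 2000000 in
/-- Lemma 3 of the paper: under (A1) and (A3), the vertex set
`M² ∩ closure(V_𝒦)` is finite and there are `τ₁ > 0`, `r > 0` and smooth curves
`z_v` with `z_v(0) = v`, tracking the zero set of `Φ̂_I` for the unique two-element
`I` containing `v`, such that `M²(t) ∩ closure(V_𝒦(t)) = ⋃_v {z_v(t)}`, each
`z_v(t)` stays in `B(v,r)`, and the balls `B(v,r)` are pairwise disjoint. -/
theorem statement3
    (φ : ℕ → Plane → ℝ → ℝ) (K : Finset ℕ)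
    (hsmooth : SmoothData φ K)
    (hA1 : AssumpBounded φ K)
    (hA3 : AssumpRank φ K) :
    (Mr φ K 2 0 ∩ closure (VK φ K 0)).Finite ∧
    ∃ τ₁ > (0:ℝ), ∃ r > (0:ℝ), ∃ z : Plane → ℝ → Plane,
      (∀ v ∈ Mr φ K 2 0 ∩ closure (VK φ K 0),
        ContDiffOn ℝ (⊤ : ℕ∞) (z v) (Icc 0 τ₁) ∧ z v 0 = v ∧
        -- `Φ̂_I(z_v(t),t) = 0` for the (unique) two-element `I ⊆ 𝒦` with `v ∈ M_I`
        (∀ I : Finset ℕ, I ⊆ K → I.card = 2 → v ∈ Mset φ I 0 →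
          ∀ t ∈ Icc (0:ℝ) τ₁, z v t ∈ Mset φ I t) ∧
        -- `‖z_v(t) − v‖ < r`
        (∀ t ∈ Icc (0:ℝ) τ₁, ‖z v t - v‖ < r)) ∧
      -- decomposition of the vertex set of the perturbed cell
      (∀ t ∈ Icc (0:ℝ) τ₁,
        Mr φ K 2 t ∩ closure (VK φ K t)
          = ⋃ v ∈ Mr φ K 2 0 ∩ closure (VK φ K 0), {z v t}) ∧
      -- the balls `B(v,r)` around distinct vertices are pairwise disjoint
      (∀ v ∈ Mr φ K 2 0 ∩ closure (VK φ K 0),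
        ∀ w ∈ Mr φ K 2 0 ∩ closure (VK φ K 0), v ≠ w →
          Disjoint (ball v r) (ball w r)) := by
  classical
  set S := Mr φ K 2 0 ∩ closure (VK φ K 0) with hSdef
  have hSfin : S.Finite := S_finite hsmooth hA1 hA3
  refine ⟨hSfin, ?_⟩
  have hpack : ∀ v ∈ S, ∃ jk : ℕ × ℕ, ∃ ε δ : ℝ, ∃ ζ : ℝ → Plane,
      jk.1 ∈ K ∧ jk.2 ∈ K ∧ jk.1 ≠ jk.2 ∧
      0 < ε ∧ 0 < δ ∧ δ ≤ ε ∧ ζ 0 = v ∧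
      (∀ x ∈ ball v ε, ∀ t' ∈ Ioo (-ε) ε, ∀ m ∈ K, m ≠ jk.1 → m ≠ jk.2 → φ m x t' < 0) ∧
      (∀ x ∈ ball v ε, ∀ t' ∈ Ioo (-ε) ε, (DxMat (φ jk.1) (φ jk.2) x t').det ≠ 0) ∧
      (∀ t' ∈ Ioo (-δ) δ, ζ t' ∈ ball v ε ∧ φ jk.1 (ζ t') t' = 0 ∧ φ jk.2 (ζ t') t' = 0 ∧
        ContDiffAt ℝ (⊤:ℕ∞) ζ t') ∧
      (∀ t' ∈ Ioo (-δ) δ, ∀ x ∈ ball v ε, φ jk.1 x t' = 0 → φ jk.2 x t' = 0 → x = ζ t') := by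
    intro v hv
    have hle : ∀ m ∈ K, φ m v 0 ≤ 0 := fun m hm => closure_VK_subset hsmooth hm 0 hv.2
    obtain ⟨j, k, hjK, hkK, hjk, hφj, hφk, hneg, hdet⟩ := vertex_structure hA3 hv.1 hle
    obtain ⟨ε, hε, δ, hδ, hδε, ζ, h1, h2, h3, h4, h5⟩ :=
      vertex_package hsmooth hjK hkK hφj hφk hneg hdet
    exact ⟨(j, k), ε, δ, ζ, hjK, hkK, hjk, hε, hδ, hδε, h1, h2, h3, h4, h5⟩
  choose jk ε δ ζ hjK hkK hjk hε hδ hδε hζ0 hnegU hdetU hcurve huniq using hpack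
  set z : Plane → ℝ → Plane := fun v s => if hv : v ∈ S then ζ v hv s else v with hzdef
  -- choose the radius r
  obtain ⟨r1, hr1, hr1prop⟩ := exists_pos_forall_finite hSfin
      (fun v ρ => ∀ hv : v ∈ S, ρ ≤ ε v hv) (by
    intro v hv
    exact ⟨ε v hv, hε v hv, fun ρ' _ hle hv' => hle⟩)
  obtain ⟨r2, hr2, hr2prop⟩ := exists_pos_forall_finite hSfin
      (fun v ρ => ∀ w ∈ S, w ≠ v → 2 * ρ ≤ dist v w) (by
    intro v hv
    obtain ⟨ρ, hρ, hprop⟩ := exists_pos_forall_finite hSfin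
        (fun w ρ => w ≠ v → 2 * ρ ≤ dist v w) (by
      intro w hw
      by_cases hwv : w = v
      · exact ⟨1, one_pos, fun ρ' _ _ h => absurd hwv h⟩
      · refine ⟨dist v w / 2, by
          have := dist_pos.mpr (fun h => hwv h.symm)
          linarith, fun ρ' hρ' hle _ => by linarith⟩)
    exact ⟨ρ, hρ, fun ρ' hρ' hle w hw hwv => le_trans (by linarith) (hprop w hw hwv)⟩)
  set r := min r1 r2 with hrdef
  have hr : 0 < r := lt_min hr1 hr2
  -- choose the time horizon
  obtain ⟨τc, hτc, hgood⟩ := good_small_time hsmooth hA1 hA3 hr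
  obtain ⟨τv, hτv, hτvprop⟩ := exists_pos_forall_finite hSfin
      (fun v τ => ∀ hv : v ∈ S, τ ≤ δ v hv / 2 ∧ ∀ s, 0 ≤ s → s ≤ τ → ζ v hv s ∈ ball v r) (by
    intro v hv
    have hcont : ContinuousAt (ζ v hv) 0 :=
      ((hcurve v hv 0 ⟨neg_lt_zero.mpr (hδ v hv), hδ v hv⟩).2.2.2).continuousAt
    have hev : ∀ᶠ s in nhds (0:ℝ), ζ v hv s ∈ ball v r := by
      apply hcont.eventually_mem
      rw [hζ0 v hv]
      exact isOpen_ball.mem_nhds (mem_ball_self hr)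
    obtain ⟨δ', hδ', hprop⟩ := Metric.eventually_nhds_iff.mp hev
    refine ⟨min (δ v hv / 2) (δ' / 2), lt_min (by have := hδ v hv; linarith) (by linarith), ?_⟩
    intro τ' hτ' hle hv'
    constructor
    · exact le_trans hle (min_le_left _ _)
    · intro s hs0 hsτ
      refine hprop ?_
      rw [Real.dist_eq, sub_zero, abs_of_nonneg hs0]
      have h1 : τ' ≤ δ' / 2 := le_trans hle (min_le_right _ _)
      linarith)
  set τ₁ := min τc τv with hτ₁def
  have hτ₁ : 0 < τ₁ := lt_min hτc hτv
  -- key interval facts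
  have hIooδ : ∀ v (hv : v ∈ S) s, 0 ≤ s → s ≤ τ₁ → s ∈ Ioo (-(δ v hv)) (δ v hv) := by
    intro v hv s hs0 hsτ
    have h1 : τ₁ ≤ δ v hv / 2 := le_trans (min_le_right _ _) ((hτvprop v hv) hv).1
    have := hδ v hv
    constructor <;> [linarith; linarith]
  have hIooε : ∀ v (hv : v ∈ S) s, 0 ≤ s → s ≤ τ₁ → s ∈ Ioo (-(ε v hv)) (ε v hv) := by
    intro v hv s hs0 hsτ
    have h := hIooδ v hv s hs0 hsτ
    have := hδε v hv
    exact ⟨by linarith [h.1], by linarith [h.2]⟩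
  have hrε : ∀ v (hv : v ∈ S), ball v r ⊆ ball v (ε v hv) :=
    fun v hv => ball_subset_ball (le_trans (min_le_left _ _) (hr1prop v hv hv))
  -- pair identification
  have hpair_eq : ∀ v (hv : v ∈ S) (I : Finset ℕ), I ⊆ K → I.card = 2 →
      ∀ x ∈ ball v (ε v hv), ∀ s ∈ Ioo (-(ε v hv)) (ε v hv),
      (∀ m ∈ I, φ m x s = 0) → I = {(jk v hv).1, (jk v hv).2} := by
    intro v hv I hIK hI2 x hx s hsIoo hvanish
    have hsub : I ⊆ {(jk v hv).1, (jk v hv).2} := by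
      intro m hm
      by_contra hcon
      have hmj : m ≠ (jk v hv).1 := fun h => hcon (by simp [h])
      have hmk : m ≠ (jk v hv).2 := fun h => hcon (by simp [h])
      exact absurd (hvanish m hm) (ne_of_lt (hnegU v hv x hx s hsIoo m (hIK hm) hmj hmk))
    refine Finset.eq_of_subset_of_card_le hsub ?_
    refine le_trans (Finset.card_insert_le _ _) ?_
    simp [hI2]
  refine ⟨τ₁, hτ₁, r, hr, z, ?_, ?_, ?_⟩
  · -- per vertex properties
    intro v hv
    have hzv : z v = ζ v hv := funext fun s => dif_pos hv
    refine ⟨?_, ?_, ?_, ?_⟩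
    · rw [hzv]
      intro s hsIcc
      exact ((hcurve v hv s (hIooδ v hv s hsIcc.1 hsIcc.2)).2.2.2).contDiffWithinAt
    · rw [hzv]; exact hζ0 v hv
    · intro I hIK hI2 hvI s hsIcc
      have hIeq : I = {(jk v hv).1, (jk v hv).2} := by
        apply hpair_eq v hv I hIK hI2 v (mem_ball_self (hε v hv)) 0
          ⟨neg_lt_zero.mpr (hε v hv), hε v hv⟩
        intro m hm
        exact hvI m hm
      rw [hzv]
      intro m hm
      rw [hIeq] at hm
      have hcs := hcurve v hv s (hIooδ v hv s hsIcc.1 hsIcc.2)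
      rcases Finset.mem_insert.mp hm with rfl | hm
      · exact hcs.2.1
      · rw [Finset.mem_singleton.mp hm]; exact hcs.2.2.1
    · intro s hsIcc
      rw [hzv]
      have := ((hτvprop v hv) hv).2 s hsIcc.1 (le_trans hsIcc.2 (min_le_right _ _))
      rwa [mem_ball, dist_eq_norm] at this
  · -- decomposition
    intro s hsIcc
    apply Set.eq_of_subset_of_subset
    · rintro x ⟨hxM, hxcl⟩
      obtain ⟨v, hvS, hxr⟩ := hgood s hsIcc.1 (le_trans hsIcc.2 (min_le_left _ _)) x hxM hxcl
      have hxball : x ∈ ball v (ε v hvS) := hrε v hvS hxr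
      obtain ⟨I, hI, hxI⟩ := Set.mem_iUnion₂.mp hxM
      have hIeq := hpair_eq v hvS I hI.1 hI.2 x hxball s
        (hIooε v hvS s hsIcc.1 hsIcc.2) (fun m hm => hxI m hm)
      have hjx : φ (jk v hvS).1 x s = 0 := hxI _ (by rw [hIeq]; simp)
      have hkx : φ (jk v hvS).2 x s = 0 := hxI _ (by rw [hIeq]; simp)
      have hxz := huniq v hvS s (hIooδ v hvS s hsIcc.1 hsIcc.2) x hxball hjx hkx
      refine Set.mem_iUnion₂.mpr ⟨v, hvS, ?_⟩
      rw [Set.mem_singleton_iff, hxz]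
      show ζ v hvS s = z v s
      rw [hzdef]
      exact (dif_pos (t := fun hv => ζ v hv s) (e := fun _ => v) hvS).symm
    · intro x hx
      obtain ⟨v, hvS, hxz⟩ := Set.mem_iUnion₂.mp hx
      rw [Set.mem_singleton_iff] at hxz
      have hzv : z v s = ζ v hvS s := dif_pos hvS
      rw [hxz, hzv]
      have hsδ := hIooδ v hvS s hsIcc.1 hsIcc.2
      have hcs := hcurve v hvS s hsδ
      have hsε := hIooε v hvS s hsIcc.1 hsIcc.2
      have hζball : ζ v hvS s ∈ ball v (ε v hvS) := hcs.1
      refine ⟨?_, ?_⟩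
      · refine Set.mem_iUnion₂.mpr ⟨{(jk v hvS).1, (jk v hvS).2}, ⟨?_, ?_⟩, ?_⟩
        · intro m hm
          rcases Finset.mem_insert.mp hm with rfl | hm
          · exact hjK v hvS
          · rw [Finset.mem_singleton.mp hm]; exact hkK v hvS
        · rw [Finset.card_insert_of_notMem (by simp [hjk v hvS]), Finset.card_singleton]
        · intro m hm
          rcases Finset.mem_insert.mp hm with rfl | hm
          · exact hcs.2.1
          · rw [Finset.mem_singleton.mp hm]; exact hcs.2.2.1
      · exact corner_mem_closure_VK hsmooth (hjK v hvS) (hkK v hvS) hcs.2.1 hcs.2.2.1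
          (fun m hm h1 h2 => hnegU v hvS _ hζball s hsε m hm h1 h2)
          (hdetU v hvS _ hζball s hsε)
  · intro v hv w hw hvw
    apply ball_disjoint_ball
    have h2 := hr2prop v hv w hw (fun h => hvw h.symm)
    have hrr : r ≤ r2 := min_le_right _ _
    linarith
end
end

section
/- Let A ⊂ ℝ² be an open bounded set, let a_1,…,a_κ ∈ ℝ² be pairwise distinct sites, and let V_i(a) := interior{x ∈ A : ‖x − a_i‖ ≤ ‖x − a_k‖ for all k ∈ {1,…,κ}} be the Voronoi cells. For x ∈ closure(A) set P(x) := {i : x ∈ closure(V_i(a))}. Suppose that no point x ∈ ℝ² satisfies ‖x − a_i‖ = ‖x − a_j‖ = ‖x − a_k‖ = ‖x − a_ℓ‖ for four distinct indices i, j, k, ℓ, and that no point x ∈ ∂A satisfies ‖x − a_i‖ = ‖x − a_j‖ = ‖x − a_k‖ for three distinct indices i, j, k. Then |P(x)| ≤ 3 for every x ∈ A and |P(x)| ≤ 2 for every x ∈ ∂A. -/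
open Set Metric
open scoped ENNReal NNReal

noncomputable section

/-- Rotation by π/2: `(v₁,v₂)^⊥ = (−v₂,v₁)`. -/
def perp (w : Plane) : Plane := (WithLp.equiv 2 (Fin 2 → ℝ)).symm ![-(w 1), w 0]

/-- The Euclidean Voronoi cell
`V_i(a) = int {x ∈ A : ‖x − a_i‖ ≤ ‖x − a_k‖ for all k}`. -/
def vorCell {κ : ℕ} (A : Set Plane) (a : Fin κ → Plane) (i : Fin κ) : Set Plane :=
  interior {x | x ∈ A ∧ ∀ k, ‖x - a i‖ ≤ ‖x - a k‖}

theorem closure_vorCell_subset {κ : ℕ} (A : Set Plane) (a : Fin κ → Plane) (i : Fin κ) :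
    closure (vorCell A a i) ⊆ {x | ∀ k, ‖x - a i‖ ≤ ‖x - a k‖} := by
  refine closure_minimal (interior_subset.trans fun y hy => hy.2) ?_
  rw [ofPred_forall]
  exact isClosed_iInter fun k => isClosed_le (by fun_prop) (by fun_prop)

theorem norm_sub_eq_of_mem_closure_vorCell {κ : ℕ} {A : Set Plane} {a : Fin κ → Plane}
    {x : Plane} {i j : Fin κ} (hi : x ∈ closure (vorCell A a i))
    (hj : x ∈ closure (vorCell A a j)) : ‖x - a i‖ = ‖x - a j‖ :=
  le_antisymm (closure_vorCell_subset A a i hi j) (closure_vorCell_subset A a j hj i)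

theorem statement14_general {κ : ℕ}
    (A : Set Plane)
    (a : Fin κ → Plane)
    (hno4 : ∀ x : Plane, ∀ i j k l : Fin κ,
      i ≠ j → i ≠ k → i ≠ l → j ≠ k → j ≠ l → k ≠ l →
      ¬(‖x - a i‖ = ‖x - a j‖ ∧ ‖x - a i‖ = ‖x - a k‖ ∧ ‖x - a i‖ = ‖x - a l‖))
    (hno3bd : ∀ x ∈ frontier A, ∀ i j k : Fin κ,
      i ≠ j → i ≠ k → j ≠ k →
      ¬(‖x - a i‖ = ‖x - a j‖ ∧ ‖x - a i‖ = ‖x - a k‖)) :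
    (∀ x ∈ A, {i : Fin κ | x ∈ closure (vorCell A a i)}.ncard ≤ 3) ∧
    (∀ x ∈ frontier A, {i : Fin κ | x ∈ closure (vorCell A a i)}.ncard ≤ 2) := by
  constructor
  · intro x _
    by_contra! h
    obtain ⟨i, hi, j, hj, k, hk, l, hl, hij, hik, hil, hjk, hjl, hkl⟩ := (three_lt_ncard).1 h
    exact hno4 x i j k l hij hik hil hjk hjl hkl
      ⟨norm_sub_eq_of_mem_closure_vorCell hi hj, norm_sub_eq_of_mem_closure_vorCell hi hk,
        norm_sub_eq_of_mem_closure_vorCell hi hl⟩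
  · intro x hx
    by_contra! h
    obtain ⟨i, hi, j, hj, k, hk, hij, hik, hjk⟩ := (two_lt_ncard).1 h
    exact hno3bd x hx i j k hij hik hjk
      ⟨norm_sub_eq_of_mem_closure_vorCell hi hj, norm_sub_eq_of_mem_closure_vorCell hi hk⟩

/-- Lemma: a point belongs to at most three Voronoi cells, and
at most two if it lies on `∂A`: with pairwise distinct sites, no quadruple
equidistant point in the plane and no triple equidistant point on `∂A`, the set
`P(x) = {i : x ∈ closure(V_i(a))}` has at most 3 elements for `x ∈ A` and at
most 2 elements for `x ∈ ∂A`. -/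
theorem statement14 {κ : ℕ}
    (A : Set Plane) (hAopen : IsOpen A) (hAbdd : Bornology.IsBounded A)
    (a : Fin κ → Plane) (hdistinct : Function.Injective a)
    (hno4 : ∀ x : Plane, ∀ i j k l : Fin κ,
      i ≠ j → i ≠ k → i ≠ l → j ≠ k → j ≠ l → k ≠ l →
      ¬(‖x - a i‖ = ‖x - a j‖ ∧ ‖x - a i‖ = ‖x - a k‖ ∧ ‖x - a i‖ = ‖x - a l‖))
    (hno3bd : ∀ x ∈ frontier A, ∀ i j k : Fin κ,
      i ≠ j → i ≠ k → j ≠ k →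
      ¬(‖x - a i‖ = ‖x - a j‖ ∧ ‖x - a i‖ = ‖x - a k‖)) :
    (∀ x ∈ A, {i : Fin κ | x ∈ closure (vorCell A a i)}.ncard ≤ 3) ∧
    (∀ x ∈ frontier A, {i : Fin κ | x ∈ closure (vorCell A a i)}.ncard ≤ 2) :=
  statement14_general A a hno4 hno3bd
end
end
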